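/- arXiv:1404.3990 — 8 statements merged into one kernel-verified Lean document; each statement's English description precedes it below -/
import Mathlib

section
/- Let f be a packing of a colorful bin packing instance into L bins. Then for all indices 1 ≤ i ≤ j ≤ n and every color c, we have L ≥ 2·C(i,j,c) − (j − i + 1). Consequently OPT ≥ LB_1. -/
/-- `cnt c i j g` is `C(i,j,g)`: the number of indices `i ≤ l ≤ j` with `c l = g`. -/
def cnt {γ : Type*} [DecidableEq γ] (c : ℕ → γ) (i j : ℕ) (g : γ) : ℕ :=
  ((Finset.Icc i j).filter fun l => c l = g).card

/-- A packing of the instance with `n` items, sizes `s` and colors `c` (items are indexed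
`1,…,n`) into bins `1,…,L`: each bin has total size at most `1`, and two items packed
consecutively into the same bin have different colors. -/
def IsPacking {γ : Type*} (n L : ℕ) (s : ℕ → ℝ) (c : ℕ → γ) (f : ℕ → ℕ) : Prop :=
  (∀ t, 1 ≤ t → t ≤ n → 1 ≤ f t ∧ f t ≤ L) ∧
  (∀ b, (∑ l ∈ (Finset.Icc 1 n).filter fun l => f l = b, s l) ≤ 1) ∧
  (∀ i j, 1 ≤ i → i < j → j ≤ n → f i = f j →
    (∀ l, i < l → l < j → f l ≠ f i) → c i ≠ c j)

/-- `OPTcost n s c` is the minimum number of bins over all packings of the instance. -/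
noncomputable def OPTcost {γ : Type*} (n : ℕ) (s : ℕ → ℝ) (c : ℕ → γ) : ℕ :=
  sInf {L | ∃ f, IsPacking n L s c f}

/-!
Fix the window of items `i, …, j`, a color `g` and a bin. Any two items of the window that are
consecutive among the window's items in that bin are also consecutive in the bin, so they do not
both have color `g`; hence the bin holds at most one more `g`-item of the window than other
items of the window. Summing over the `L` bins gives `C ≤ (j - i + 1 - C) + L`.
-/

open Finset

section Counting

variable {α ι κ : Type*}

theorem Finset.exists_least_gt [LinearOrder α] {S : Finset α} {x a : α} (ha : a ∈ S)
    (hxa : x < a) : ∃ y ∈ S, x < y ∧ ∀ z ∈ S, x < z → y ≤ z := by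
  obtain ⟨y, hy, hmin⟩ :=
    (S.filter (x < ·)).exists_min_image id ⟨a, mem_filter.2 ⟨ha, hxa⟩⟩
  rw [mem_filter] at hy
  exact ⟨y, hy.1, hy.2, fun z hz hxz => hmin z (mem_filter.2 ⟨hz, hxz⟩)⟩

/-- The successor in `S` of a `P`-element other than `max S` lies outside `P`, and taking
successors is injective. -/
theorem card_filter_le_card_filter_not_add_one [LinearOrder α] (S : Finset α) (P : α → Prop)
    [DecidablePred P]
    (h : ∀ x ∈ S, ∀ y ∈ S, x < y → (∀ z ∈ S, x < z → y ≤ z) → P x → ¬P y) :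
    #(S.filter P) ≤ #(S.filter (¬P ·)) + 1 := by
  rcases S.eq_empty_or_nonempty with rfl | hS
  · simp
  set D := (S.filter P).erase (S.max' hS)
  have hDS : ∀ x ∈ D, x ∈ S := fun x hx => (mem_filter.1 (mem_of_mem_erase hx)).1
  have hsucc :
      ∀ x ∈ D, ∃ y ∈ S.filter (¬P ·), x < y ∧ ∀ z ∈ S, x < z → y ≤ z := by
    intro x hx
    obtain ⟨hxm, hxS, hPx⟩ : x ≠ S.max' hS ∧ x ∈ S ∧ P x := by simpa [D] using hx
    obtain ⟨y, hyS, hxy, hmin⟩ :=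
      exists_least_gt (S.max'_mem hS) ((S.le_max' x hxS).lt_of_ne hxm)
    exact ⟨y, mem_filter.2 ⟨hyS, h x hxS y hyS hxy hmin hPx⟩, hxy, hmin⟩
  choose! succ hsucc using hsucc
  have hmono : StrictMonoOn succ D := fun x hx x' hx' hxx' =>
    ((hsucc x hx).2.2 x' (hDS x' hx') hxx').trans_lt (hsucc x' hx').2.1
  have hD := card_le_card_of_injOn succ (fun x hx => (hsucc x hx).1) hmono.injOn
  have : #(S.filter P) - 1 ≤ #D := pred_card_le_card_erase
  omega

theorem card_filter_le_card_filter_not_add_card [DecidableEq κ] {t : Finset ι} {B : Finset κ}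
    {f : ι → κ} (hf : Set.MapsTo f t B) (P : ι → Prop) [DecidablePred P]
    (h : ∀ b ∈ B,
      #((t.filter (f · = b)).filter P) ≤ #((t.filter (f · = b)).filter (¬P ·)) + 1) :
    #(t.filter P) ≤ #(t.filter (¬P ·)) + #B := by
  have hsub : ∀ Q : ι → Prop, [DecidablePred Q] → Set.MapsTo f (t.filter Q) B :=
    fun _ _ => hf.mono_left (coe_subset.2 (filter_subset _ _))
  rw [card_eq_sum_card_fiberwise (hsub P), card_eq_sum_card_fiberwise (hsub (¬P ·)),
    card_eq_sum_ones B, ← sum_add_distrib]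
  refine sum_le_sum fun b hb => ?_
  simpa only [filter_comm] using h b hb

end Counting

namespace IsPacking

variable {γ : Type*} {n L : ℕ} {s : ℕ → ℝ} {c : ℕ → γ} {f : ℕ → ℕ}

theorem card_color_le_card_not_color_add_one [DecidableEq γ] (hf : IsPacking n L s c f)
    {i j : ℕ} (hi : 1 ≤ i) (hj : j ≤ n) (g : γ) (b : ℕ) :
    #(((Icc i j).filter (f · = b)).filter (c · = g))
      ≤ #(((Icc i j).filter (f · = b)).filter (¬c · = g)) + 1 := by
  refine card_filter_le_card_filter_not_add_one _ _ fun x hx y hy hxy hnext hcx hcy => ?_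
  simp only [mem_filter, mem_Icc] at hx hy
  refine hf.2.2 x y (hi.trans hx.1.1) hxy (hy.1.2.trans hj) (hx.2.trans hy.2.symm)
    (fun l hxl hly hfl => ?_) (hcx.trans hcy.symm)
  have := hnext l (mem_filter.2 ⟨mem_Icc.2 ⟨by omega, by omega⟩, hfl.trans hx.2⟩) hxl
  omega

theorem two_mul_cnt_le [DecidableEq γ] (hf : IsPacking n L s c f) {i j : ℕ} (hi : 1 ≤ i)
    (hj : j ≤ n) (g : γ) :
    2 * cnt c i j g ≤ j + 1 - i + L := by
  have hbins : Set.MapsTo f (Icc i j) (Icc 1 L) := fun l hl => by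
    simp only [coe_Icc, Set.mem_Icc] at hl ⊢
    exact hf.1 l (by omega) (by omega)
  have hcolor := card_filter_le_card_filter_not_add_card hbins (c · = g)
    fun b _ => hf.card_color_le_card_not_color_add_one hi hj g b
  have hsplit := card_filter_add_card_filter_not (s := Icc i j) (c · = g)
  simp only [Nat.card_Icc, Nat.add_sub_cancel] at hcolor hsplit
  unfold cnt
  omega

end IsPacking

theorem exists_isPacking_OPTcost {γ : Type*} {n L : ℕ} {s : ℕ → ℝ} {c : ℕ → γ}
    (h : ∃ f, IsPacking n L s c f) : ∃ f, IsPacking n (OPTcost n s c) s c f :=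
  Nat.sInf_mem (s := {L | ∃ f, IsPacking n L s c f}) ⟨L, h⟩

theorem packing_ge_LB_general {γ : Type*} [DecidableEq γ] (n L : ℕ) (s : ℕ → ℝ) (c : ℕ → γ)
    (f : ℕ → ℕ) (hf : IsPacking n L s c f) :
    (∀ i j : ℕ, ∀ g : γ, 1 ≤ i → i ≤ j → j ≤ n →
      2 * (cnt c i j g : ℤ) - ((j : ℤ) - (i : ℤ) + 1) ≤ (L : ℤ)) ∧
    (∀ i j : ℕ, ∀ g : γ, 1 ≤ i → i ≤ j → j ≤ n →
      2 * (cnt c i j g : ℤ) - ((j : ℤ) - (i : ℤ) + 1) ≤ (OPTcost n s c : ℤ)) := by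
  obtain ⟨f', hf'⟩ := exists_isPacking_OPTcost ⟨f, hf⟩
  constructor
  · intro i j g hi hij hj
    have := hf.two_mul_cnt_le hi hj g
    omega
  · intro i j g hi hij hj
    have := hf'.two_mul_cnt_le hi hj g
    omega

/-- if `f` is a packing into `L` bins then for all `1 ≤ i ≤ j ≤ n` and every
color `g`, `L ≥ 2·C(i,j,g) − (j − i + 1)`; consequently `OPT ≥ LB(i,j,g)` for all such
`i, j, g`, i.e. `OPT ≥ LB_1`. -/
theorem packing_ge_LB {γ : Type*} [DecidableEq γ] (n L : ℕ) (s : ℕ → ℝ) (c : ℕ → γ)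
    (hs : ∀ t, 1 ≤ t → t ≤ n → s t ∈ Set.Icc (0 : ℝ) 1)
    (f : ℕ → ℕ) (hf : IsPacking n L s c f) :
    (∀ i j : ℕ, ∀ g : γ, 1 ≤ i → i ≤ j → j ≤ n →
      2 * (cnt c i j g : ℤ) - ((j : ℤ) - (i : ℤ) + 1) ≤ (L : ℤ)) ∧
    (∀ i j : ℕ, ∀ g : γ, 1 ≤ i → i ≤ j → j ≤ n →
      2 * (cnt c i j g : ℤ) - ((j : ℤ) - (i : ℤ) + 1) ≤ (OPTcost n s c : ℤ)) :=
  packing_ge_LB_general n L s c f hf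
end

section
/- Consider any run of BaP on a colorful bin packing instance, with k pseudo-bins at the end. For every 1 ≤ m ≤ k there exists an index i ≤ Y_m such that C(i, Y_m, X_m) ≥ (m+3)/4 + (Y_m − i)/2. -/
/-- A run of the algorithm Balanced-Pseudo (BaP) on an instance of `n` items with colors
`color 1, …, color n`.  `assign t` is the (1-based) index of the pseudo-bin receiving item `t`,
`nbins t` is the number of pseudo-bins after items `1,…,t` have been processed, and
`bcolor t j` is the color of pseudo-bin `j` after items `1,…,t` have been processed
(the color of the last item assigned to it).  When item `t` arrives, either all existing
pseudo-bins have color `color t` and a new pseudo-bin is opened, or item `t` is assigned to an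
existing pseudo-bin whose color `g` differs from `color t` and is such that the number of
pseudo-bins of color `g` is maximal among colors different from `color t` (ties arbitrary). -/
structure BaPRun (n : ℕ) {γ : Type*} [DecidableEq γ] (color : ℕ → γ) where
  assign : ℕ → ℕ
  nbins : ℕ → ℕ
  bcolor : ℕ → ℕ → γ
  nbins_zero : nbins 0 = 0
  step : ∀ t, 1 ≤ t → t ≤ n →
    (assign t = nbins (t - 1) + 1 ∧ nbins t = nbins (t - 1) + 1 ∧
      ∀ j, 1 ≤ j → j ≤ nbins (t - 1) → bcolor (t - 1) j = color t) ∨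
    (1 ≤ assign t ∧ assign t ≤ nbins (t - 1) ∧ nbins t = nbins (t - 1) ∧
      bcolor (t - 1) (assign t) ≠ color t ∧
      ∀ g, g ≠ color t →
        ((Finset.Icc 1 (nbins (t - 1))).filter fun j => bcolor (t - 1) j = g).card ≤
          ((Finset.Icc 1 (nbins (t - 1))).filter fun j =>
            bcolor (t - 1) j = bcolor (t - 1) (assign t)).card)
  bcolor_step : ∀ t, 1 ≤ t → t ≤ n → ∀ j,
    bcolor t j = if j = assign t then color t else bcolor (t - 1) j

/-- `R.Y m` is the index of the first item assigned to pseudo-bin `m`. -/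
noncomputable def BaPRun.Y {n : ℕ} {γ : Type*} [DecidableEq γ] {c : ℕ → γ}
    (R : BaPRun n c) (m : ℕ) : ℕ :=
  sInf {t | 1 ≤ t ∧ t ≤ n ∧ R.assign t = m}

/-- The number of pseudo-bins of color `g` just after items `1,…,t` have been processed. -/
def BaPRun.binsOfColor {n : ℕ} {γ : Type*} [DecidableEq γ] {c : ℕ → γ}
    (R : BaPRun n c) (t : ℕ) (g : γ) : ℕ :=
  ((Finset.Icc 1 (R.nbins t)).filter fun j => R.bcolor t j = g).card

/-- Changing a function at one point of a finset changes the count of a value by the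
obvious correction terms. -/
lemma bap_card_update {γ : Type*} [DecidableEq γ] (s : Finset ℕ) (j0 : ℕ)
    (hj : j0 ∈ s) (f g : ℕ → γ) (X : γ) (hfg : ∀ j ∈ s, j ≠ j0 → g j = f j) :
    (s.filter fun j => g j = X).card + (if f j0 = X then 1 else 0)
      = (s.filter fun j => f j = X).card + (if g j0 = X then 1 else 0) := by
  have key : ∀ h : ℕ → γ,
      (s.filter fun j => h j = X).card
        = ((s.erase j0).filter fun j => h j = X).card + (if h j0 = X then 1 else 0) := by
    intro h
    conv_lhs => rw [← Finset.insert_erase hj]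
    rw [Finset.filter_insert]
    split_ifs with h0
    · exact Finset.card_insert_of_notMem
        (fun hm => Finset.notMem_erase j0 s (Finset.mem_filter.mp hm).1)
    · simp
  have heq : ((s.erase j0).filter fun j => g j = X)
      = ((s.erase j0).filter fun j => f j = X) := by
    apply Finset.filter_congr
    intro j hj'
    rw [Finset.mem_erase] at hj'
    rw [hfg j hj'.2 hj'.1]
  rw [key f, key g, heq]
  ring

/-- One step of the potential `Φ t = 2·binsOfColor t X − nbins t`. -/
lemma bap_phi_step {γ : Type*} [DecidableEq γ] {n : ℕ} {c : ℕ → γ} (R : BaPRun n c)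
    (X : γ) (t : ℕ) (h1 : 1 ≤ t) (h2 : t ≤ n) :
    (c t = X ∧ 2 * (R.binsOfColor t X : ℤ) - R.nbins t
        ≤ 2 * (R.binsOfColor (t-1) X : ℤ) - R.nbins (t-1) + 2)
    ∨ (c t ≠ X ∧
        (2 * (R.binsOfColor t X : ℤ) - R.nbins t
            ≤ 2 * (R.binsOfColor (t-1) X : ℤ) - R.nbins (t-1) - 2
          ∨ 2 * (R.binsOfColor t X : ℤ) - R.nbins t ≤ 0)) := by
  have hbc := R.bcolor_step t h1 h2
  rcases R.step t h1 h2 with ⟨ha, hn, hall⟩ | ⟨hj1, hj2, hn, hne, hbal⟩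
  · -- opening case
    by_cases hX : c t = X
    · left
      refine ⟨hX, ?_⟩
      have hD1 : R.binsOfColor (t-1) X = R.nbins (t-1) := by
        unfold BaPRun.binsOfColor
        rw [Finset.filter_true_of_mem, Nat.card_Icc]
        · omega
        · intro j hj
          rw [Finset.mem_Icc] at hj
          rw [hall j hj.1 hj.2, hX]
      have hD2 : R.binsOfColor t X = R.nbins (t-1) + 1 := by
        unfold BaPRun.binsOfColor
        rw [hn, Finset.filter_true_of_mem, Nat.card_Icc]
        · omega
        · intro j hj
          rw [Finset.mem_Icc] at hj
          rw [hbc j]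
          by_cases hje : j = R.assign t
          · rw [if_pos hje, hX]
          · rw [if_neg hje]
            have hje' : j ≠ R.nbins (t-1) + 1 := by rw [← ha]; exact hje
            rw [hall j hj.1 (by omega), hX]
      omega
    · right
      refine ⟨hX, Or.inr ?_⟩
      have hD2 : R.binsOfColor t X = 0 := by
        unfold BaPRun.binsOfColor
        rw [Finset.card_eq_zero, Finset.filter_eq_empty_iff]
        intro j hj
        rw [hn, Finset.mem_Icc] at hj
        rw [hbc j]
        by_cases hje : j = R.assign t
        · rw [if_pos hje]; exact hX
        · rw [if_neg hje]
          have hje' : j ≠ R.nbins (t-1) + 1 := by rw [← ha]; exact hje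
          rw [hall j hj.1 (by omega)]
          exact hX
      omega
  · -- non-opening case
    have hmem : R.assign t ∈ Finset.Icc 1 (R.nbins (t-1)) := Finset.mem_Icc.mpr ⟨hj1, hj2⟩
    have hupd : ((Finset.Icc 1 (R.nbins (t-1))).filter fun j => R.bcolor t j = X).card
          + (if R.bcolor (t-1) (R.assign t) = X then 1 else 0)
        = ((Finset.Icc 1 (R.nbins (t-1))).filter fun j => R.bcolor (t-1) j = X).card
          + (if R.bcolor t (R.assign t) = X then 1 else 0) :=
      bap_card_update _ _ hmem _ _ X (fun j _ hne' => by rw [hbc j, if_neg hne'])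
    have hg : R.bcolor t (R.assign t) = c t := by rw [hbc (R.assign t), if_pos rfl]
    rw [hg] at hupd
    have hDt : R.binsOfColor t X
        = ((Finset.Icc 1 (R.nbins (t-1))).filter fun j => R.bcolor t j = X).card := by
      unfold BaPRun.binsOfColor
      rw [hn]
    have hDt1 : R.binsOfColor (t-1) X
        = ((Finset.Icc 1 (R.nbins (t-1))).filter fun j => R.bcolor (t-1) j = X).card := rfl
    by_cases hX : c t = X
    · left
      refine ⟨hX, ?_⟩
      have hgX : R.bcolor (t-1) (R.assign t) ≠ X := hX ▸ hne
      rw [if_neg hgX, if_pos hX] at hupd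
      omega
    · right
      refine ⟨hX, ?_⟩
      by_cases hgX : R.bcolor (t-1) (R.assign t) = X
      · left
        rw [if_pos hgX, if_neg hX] at hupd
        omega
      · right
        rw [if_neg hgX, if_neg hX] at hupd
        have hb := hbal X (fun h => hX h.symm)
        have hdisj : Disjoint
            ((Finset.Icc 1 (R.nbins (t-1))).filter fun j => R.bcolor (t-1) j = X)
            ((Finset.Icc 1 (R.nbins (t-1))).filter fun j =>
              R.bcolor (t-1) j = R.bcolor (t-1) (R.assign t)) := by
          rw [Finset.disjoint_left]
          intro a haF haG
          rw [Finset.mem_filter] at haF haG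
          exact hgX (haG.2 ▸ haF.2 ▸ rfl)
        have hsum : ((Finset.Icc 1 (R.nbins (t-1))).filter fun j => R.bcolor (t-1) j = X).card
            + ((Finset.Icc 1 (R.nbins (t-1))).filter fun j =>
                R.bcolor (t-1) j = R.bcolor (t-1) (R.assign t)).card ≤ R.nbins (t-1) := by
          have h1 := Finset.card_union_of_disjoint hdisj
          have h2 : (((Finset.Icc 1 (R.nbins (t-1))).filter fun j => R.bcolor (t-1) j = X)
              ∪ ((Finset.Icc 1 (R.nbins (t-1))).filter fun j =>
                  R.bcolor (t-1) j = R.bcolor (t-1) (R.assign t))).card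
              ≤ (Finset.Icc 1 (R.nbins (t-1))).card :=
            Finset.card_le_card
              (Finset.union_subset (Finset.filter_subset _ _) (Finset.filter_subset _ _))
          rw [Nat.card_Icc] at h2
          omega
        omega

/-- If `m ≤ nbins u` then some item `t ≤ u` was assigned to bin `m`. -/
lemma bap_first_reach {γ : Type*} [DecidableEq γ] {n : ℕ} {c : ℕ → γ} (R : BaPRun n c) :
    ∀ u, u ≤ n → ∀ m, 1 ≤ m → m ≤ R.nbins u → ∃ t, 1 ≤ t ∧ t ≤ u ∧ R.assign t = m := by
  intro u
  induction u with
  | zero =>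
    intro _ m hm h
    rw [R.nbins_zero] at h
    omega
  | succ u ih =>
    intro hu m hm h
    by_cases hc : m ≤ R.nbins u
    · obtain ⟨t, h1, h2, h3⟩ := ih (by omega) m hm hc
      exact ⟨t, h1, by omega, h3⟩
    · rcases R.step (u+1) (by omega) hu with ⟨ha, hn, _⟩ | ⟨_, _, hn, _, _⟩
      · rw [Nat.add_sub_cancel] at ha hn
        exact ⟨u+1, by omega, le_rfl, by omega⟩
      · rw [Nat.add_sub_cancel] at hn
        omega

/-- for any run of BaP with `k` pseudo-bins at the end, for every `1 ≤ m ≤ k`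
there is an index `i ≤ Y_m` with `C(i, Y_m, X_m) ≥ (m+3)/4 + (Y_m − i)/2`,
where `Y_m` is the first item assigned to pseudo-bin `m` and `X_m` is its color. -/
theorem bap_count_at_pseudo_bin_opening {γ : Type*} [DecidableEq γ] (n : ℕ) (c : ℕ → γ)
    (R : BaPRun n c) (m : ℕ) (hm1 : 1 ≤ m) (hmk : m ≤ R.nbins n) :
    ∃ i : ℕ, 1 ≤ i ∧ i ≤ R.Y m ∧
      ((m : ℝ) + 3) / 4 + ((R.Y m : ℝ) - (i : ℝ)) / 2 ≤
        (cnt c i (R.Y m) (c (R.Y m)) : ℝ) := by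
  classical
  have hne : Set.Nonempty {t | 1 ≤ t ∧ t ≤ n ∧ R.assign t = m} := by
    obtain ⟨t, h1, h2, h3⟩ := bap_first_reach R n le_rfl m hm1 hmk
    exact ⟨t, h1, h2, h3⟩
  set T := R.Y m with hTdef
  have hTmem : 1 ≤ T ∧ T ≤ n ∧ R.assign T = m := Nat.sInf_mem hne
  obtain ⟨hT1, hTn, hTa⟩ := hTmem
  -- at time T a new pseudo-bin (bin m) is opened
  have hopen : R.nbins (T-1) = m - 1 ∧ ∀ j, 1 ≤ j → j ≤ m - 1 → R.bcolor (T-1) j = c T := by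
    rcases R.step T hT1 hTn with ⟨ha, hn, hall⟩ | ⟨hj1, hj2, hn, hne', hbal⟩
    · have hnb : R.nbins (T-1) = m - 1 := by omega
      exact ⟨hnb, fun j h1 h2 => hall j h1 (by omega)⟩
    · exfalso
      have hmle : m ≤ R.nbins (T-1) := by omega
      obtain ⟨t', h1', h2', h3'⟩ := bap_first_reach R (T-1) (by omega) m hm1 hmle
      have hle : T ≤ t' :=
        Nat.sInf_le (show 1 ≤ t' ∧ t' ≤ n ∧ R.assign t' = m from ⟨h1', by omega, h3'⟩)
      omega
  obtain ⟨hnbT, hallT⟩ := hopen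
  -- value of the counter at time T-1
  have hDT : R.binsOfColor (T-1) (c T) = m - 1 := by
    unfold BaPRun.binsOfColor
    rw [hnbT, Finset.filter_true_of_mem, Nat.card_Icc]
    · omega
    · intro j hj
      rw [Finset.mem_Icc] at hj
      exact hallT j hj.1 hj.2
  -- potential at time 0
  have hPhi0 : 2 * (R.binsOfColor 0 (c T) : ℤ) - R.nbins 0 ≤ 0 := by
    have h1 : R.binsOfColor 0 (c T) = 0 := by
      unfold BaPRun.binsOfColor
      rw [R.nbins_zero]
      simp
    rw [h1, R.nbins_zero]
    simp
  -- τ : the last time before T with nonpositive potential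
  have hFne : ((Finset.range T).filter
      fun t => 2 * (R.binsOfColor t (c T) : ℤ) - R.nbins t ≤ 0).Nonempty :=
    ⟨0, Finset.mem_filter.mpr ⟨Finset.mem_range.mpr (by omega), hPhi0⟩⟩
  set τ := ((Finset.range T).filter
      fun t => 2 * (R.binsOfColor t (c T) : ℤ) - R.nbins t ≤ 0).max' hFne with hτdef
  have hτmem := Finset.max'_mem _ hFne
  rw [Finset.mem_filter, Finset.mem_range] at hτmem
  obtain ⟨hτT, hτ0⟩ := hτmem
  have hmax : ∀ t, t < T → 2 * (R.binsOfColor t (c T) : ℤ) - R.nbins t ≤ 0 → t ≤ τ := by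
    intro t ht hφ
    exact Finset.le_max' _ t (Finset.mem_filter.mpr ⟨Finset.mem_range.mpr ht, hφ⟩)
  -- key accumulation claim
  have claim : ∀ u, τ ≤ u → u ≤ T - 1 →
      2 * (R.binsOfColor u (c T) : ℤ) - R.nbins u + 2 * ((u : ℤ) - τ)
        ≤ 4 * cnt c (τ+1) u (c T) := by
    intro u hu
    induction u, hu using Nat.le_induction with
    | base =>
      intro _
      have hz : cnt c (τ+1) τ (c T) = 0 := by
        unfold cnt
        rw [Finset.Icc_eq_empty (by omega)]
        simp
      rw [hz]
      push_cast
      linarith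
    | succ u hu ih =>
      intro hu2
      have ih' := ih (by omega)
      have hstep := bap_phi_step R (c T) (u+1) (by omega) (by omega)
      rw [Nat.add_sub_cancel] at hstep
      have hIcc : Finset.Icc (τ+1) (u+1) = insert (u+1) (Finset.Icc (τ+1) u) := by
        ext x
        simp only [Finset.mem_Icc, Finset.mem_insert]
        omega
      have hnotmem : u+1 ∉ Finset.Icc (τ+1) u := by
        simp [Finset.mem_Icc]
      rcases hstep with ⟨hcX, hφ⟩ | ⟨hcX, hφ⟩
      · have hcnt : cnt c (τ+1) (u+1) (c T) = cnt c (τ+1) u (c T) + 1 := by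
          unfold cnt
          rw [hIcc, Finset.filter_insert, if_pos hcX,
            Finset.card_insert_of_notMem (fun hm => hnotmem (Finset.mem_filter.mp hm).1)]
        rw [hcnt]
        push_cast
        push_cast at ih'
        linarith
      · have hcnt : cnt c (τ+1) (u+1) (c T) = cnt c (τ+1) u (c T) := by
          unfold cnt
          rw [hIcc, Finset.filter_insert, if_neg hcX]
        have hφ' : 2 * (R.binsOfColor (u+1) (c T) : ℤ) - R.nbins (u+1)
            ≤ 2 * (R.binsOfColor u (c T) : ℤ) - R.nbins u - 2 := by
          rcases hφ with h | h
          · exact h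
          · exfalso
            have := hmax (u+1) (by omega) h
            omega
        rw [hcnt]
        push_cast
        push_cast at ih'
        linarith
  have hfin := claim (T-1) (by omega) le_rfl
  rw [hDT, hnbT] at hfin
  have hcntT : cnt c (τ+1) T (c T) = cnt c (τ+1) (T-1) (c T) + 1 := by
    unfold cnt
    have hIcc : Finset.Icc (τ+1) T = insert T (Finset.Icc (τ+1) (T-1)) := by
      ext x
      simp only [Finset.mem_Icc, Finset.mem_insert]
      omega
    have hnotmem : T ∉ Finset.Icc (τ+1) (T-1) := by
      simp only [Finset.mem_Icc]
      omega
    rw [hIcc, Finset.filter_insert, if_pos rfl,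
      Finset.card_insert_of_notMem (fun hm => hnotmem (Finset.mem_filter.mp hm).1)]
  refine ⟨τ+1, by omega, by omega, ?_⟩
  have hfin' : (m : ℤ) - 1 + 2 * ((T : ℤ) - 1 - τ) ≤ 4 * cnt c (τ+1) (T-1) (c T) := by
    have h1 : ((T - 1 : ℕ) : ℤ) = (T : ℤ) - 1 := by omega
    have h2 : ((m - 1 : ℕ) : ℤ) = (m : ℤ) - 1 := by omega
    rw [h1, h2] at hfin
    linarith
  have hR : (m : ℝ) - 1 + 2 * ((T : ℝ) - 1 - τ) ≤ 4 * (cnt c (τ+1) (T-1) (c T) : ℝ) := by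
    exact_mod_cast hfin'
  rw [hcntT]
  push_cast
  linarith
end

section
/- Consider any run of BaP and let 2 ≤ m ≤ k−1. If at some time during phase m an item i with c_i ≠ X_{m+1} is assigned to a pseudo-bin whose current color (the color of the last item previously assigned to it) is different from X_{m+1}, then just before item i is assigned, the number of pseudo-bins of color X_{m+1} is at most m/2. -/
/-- if during phase `m` (for `2 ≤ m ≤ k−1`) an item `i` with `c i ≠ X_{m+1}`
is assigned to an existing pseudo-bin whose current color differs from `X_{m+1}`, then just
before item `i` is assigned there are at most `m/2` pseudo-bins of color `X_{m+1}`. -/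
theorem bap_few_bins_of_next_color {γ : Type*} [DecidableEq γ] (n : ℕ) (c : ℕ → γ)
    (R : BaPRun n c) (m : ℕ) (hm2 : 2 ≤ m) (hmk : m + 1 ≤ R.nbins n)
    (i : ℕ) (hi1 : R.Y m ≤ i) (hi2 : i ≤ R.Y (m + 1) - 1)
    (hci : c i ≠ c (R.Y (m + 1)))
    (hex1 : 1 ≤ R.assign i) (hex2 : R.assign i ≤ R.nbins (i - 1))
    (hbc : R.bcolor (i - 1) (R.assign i) ≠ c (R.Y (m + 1))) :
    2 * R.binsOfColor (i - 1) (c (R.Y (m + 1))) ≤ m := by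
  -- Lemma: if nbins s ≥ j ≥ 1 then some t ≤ s opened bin j.
  have key : ∀ s, s ≤ n → ∀ j, 1 ≤ j → j ≤ R.nbins s →
      ∃ t, 1 ≤ t ∧ t ≤ s ∧ R.assign t = j := by
    intro s
    induction s with
    | zero => intro _ j hj1 hj2; rw [R.nbins_zero] at hj2; omega
    | succ s ih =>
      intro hs j hj1 hj2
      rcases R.step (s + 1) (by omega) hs with ⟨ha, hn, _⟩ | ⟨_, _, hn, _⟩
      · simp only [Nat.add_sub_cancel] at ha hn
        rcases Nat.lt_or_ge (R.nbins s) j with h | h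
        · exact ⟨s + 1, by omega, le_refl _, by omega⟩
        · obtain ⟨t, ht⟩ := ih (by omega) j hj1 h
          exact ⟨t, ht.1, by omega, ht.2.2⟩
      · simp only [Nat.add_sub_cancel] at hn
        obtain ⟨t, ht⟩ := ih (by omega) j hj1 (by omega)
        exact ⟨t, ht.1, by omega, ht.2.2⟩
  -- Y (m+1) is a genuine element of its defining set
  obtain ⟨t₁, ht₁⟩ := key n (le_refl n) (m + 1) (by omega) hmk
  have hYmem : R.Y (m + 1) ∈ {t | 1 ≤ t ∧ t ≤ n ∧ R.assign t = m + 1} :=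
    Nat.sInf_mem ⟨t₁, ht₁.1, by omega, ht₁.2.2⟩
  obtain ⟨hY1, hYn, _⟩ := hYmem
  -- Y m ≥ 1
  obtain ⟨t₂, ht₂⟩ := key n (le_refl n) m (by omega) (by omega)
  have hYm1 : 1 ≤ R.Y m := (Nat.sInf_mem (⟨t₂, ht₂.1, by omega, ht₂.2.2⟩ :
    Set.Nonempty {t | 1 ≤ t ∧ t ≤ n ∧ R.assign t = m})).1
  have hi1' : 1 ≤ i := le_trans hYm1 hi1
  have hin : i ≤ n := by omega
  -- nbins (i-1) ≤ m
  have hnb : R.nbins (i - 1) ≤ m := by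
    by_contra h
    obtain ⟨t, ht1, ht2, ht3⟩ := key (i - 1) (by omega) (m + 1) (by omega) (by omega)
    have : R.Y (m + 1) ≤ t := Nat.sInf_le ⟨ht1, by omega, ht3⟩
    omega
  -- step at i must be in the second branch
  rcases R.step i hi1' hin with ⟨ha, _, _⟩ | ⟨_, _, _, hne, hmax⟩
  · omega
  · set X := c (R.Y (m + 1)) with hX
    set g := R.bcolor (i - 1) (R.assign i) with hg
    have h1 : R.binsOfColor (i - 1) X ≤ R.binsOfColor (i - 1) g := hmax X hci.symm
    have hXg : X ≠ g := Ne.symm hbc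
    have hdisj : Disjoint
        ((Finset.Icc 1 (R.nbins (i - 1))).filter fun j => R.bcolor (i - 1) j = X)
        ((Finset.Icc 1 (R.nbins (i - 1))).filter fun j => R.bcolor (i - 1) j = g) := by
      rw [Finset.disjoint_left]
      intro a ha hb
      rw [Finset.mem_filter] at ha hb
      exact hXg (ha.2.symm.trans hb.2)
    have h2 : R.binsOfColor (i - 1) X + R.binsOfColor (i - 1) g ≤ R.nbins (i - 1) := by
      unfold BaPRun.binsOfColor
      rw [← Finset.card_union_of_disjoint hdisj]
      calc _ ≤ (Finset.Icc 1 (R.nbins (i - 1))).card :=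
            Finset.card_le_card (Finset.union_subset (Finset.filter_subset _ _)
              (Finset.filter_subset _ _))
        _ = R.nbins (i - 1) := by rw [Nat.card_Icc]; omega
    omega
end

section
/- Consider any run of BaP and let 2 ≤ m ≤ k−1. If at every time during phase m the number of pseudo-bins of color X_{m+1} is at least (m+1)/2, then X_m = X_{m+1}; moreover, letting t be the number of items of color X_m among the items Y_m, …, Y_{m+1}−1 of phase m, the number of items of other colors in phase m is exactly t − 1. -/
namespace BaPRun

variable {n : ℕ} {γ : Type*} [DecidableEq γ] {c : ℕ → γ} (R : BaPRun n c)

lemma nbins_le_succ (t : ℕ) (ht : t + 1 ≤ n) : R.nbins t ≤ R.nbins (t + 1) := by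
  rcases R.step (t + 1) (by omega) ht with ⟨_, h2, _⟩ | ⟨_, _, h2, _⟩ <;>
    simp only [Nat.add_sub_cancel] at h2 <;> omega

lemma nbins_mono {s t : ℕ} (hst : s ≤ t) (htn : t ≤ n) : R.nbins s ≤ R.nbins t := by
  induction t with
  | zero =>
    obtain rfl : s = 0 := Nat.le_zero.1 hst
    exact le_rfl
  | succ t ih =>
    rcases Nat.lt_or_ge s (t + 1) with hlt | hge
    · exact (ih (by omega) (by omega)).trans (R.nbins_le_succ t htn)
    · obtain rfl : s = t + 1 := by omega
      exact le_rfl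

/-- Basic properties of the opening time `Y j` of bin `j`. -/
lemma Y_spec (j : ℕ) (hj1 : 1 ≤ j) (hj : j ≤ R.nbins n) :
    1 ≤ R.Y j ∧ R.Y j ≤ n ∧ R.nbins (R.Y j - 1) + 1 = j ∧ R.nbins (R.Y j) = j ∧
    R.assign (R.Y j) = j ∧
    (∀ i, 1 ≤ i → i ≤ R.nbins (R.Y j - 1) → R.bcolor (R.Y j - 1) i = c (R.Y j)) ∧
    (∀ s, s < R.Y j → R.nbins s < j) := by
  have hex : ∃ t, j ≤ R.nbins t := ⟨n, hj⟩
  set t0 := Nat.find hex with ht0def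
  have ht0spec : j ≤ R.nbins t0 := Nat.find_spec hex
  have ht0min : ∀ s, s < t0 → R.nbins s < j := by
    intro s hs
    have := Nat.find_min hex hs
    omega
  have ht0n : t0 ≤ n := Nat.find_min' hex hj
  have ht01 : 1 ≤ t0 := by
    by_contra hc
    have h0 : t0 = 0 := by omega
    rw [h0, R.nbins_zero] at ht0spec; omega
  have hprev : R.nbins (t0 - 1) < j := ht0min _ (by omega)
  rcases R.step t0 ht01 ht0n with ⟨ha, hnb, hall⟩ | ⟨_, _, heq, _⟩
  swap
  · omega
  have hYt0 : R.Y j = t0 := by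
    have hmem : t0 ∈ {t | 1 ≤ t ∧ t ≤ n ∧ R.assign t = j} := ⟨ht01, ht0n, by omega⟩
    have hlb : ∀ t ∈ {t | 1 ≤ t ∧ t ≤ n ∧ R.assign t = j}, t0 ≤ t := by
      rintro t ⟨h1, h2, h3⟩
      by_contra hc
      push_neg at hc
      have hlt : R.nbins t < j := ht0min t hc
      have hltp : R.nbins (t - 1) < j := ht0min (t - 1) (by omega)
      rcases R.step t h1 h2 with ⟨ha', hn', _⟩ | ⟨_, hle', _, _⟩ <;> omega
    exact le_antisymm (Nat.sInf_le hmem) (le_csInf ⟨t0, hmem⟩ hlb)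
  rw [hYt0]
  exact ⟨ht01, ht0n, by omega, by omega, by omega, fun i hi1 hi2 => hall i hi1 hi2, ht0min⟩

lemma count_step (t : ℕ) (h1 : 1 ≤ t) (h2 : t ≤ n) (heq : R.nbins t = R.nbins (t - 1))
    (ha1 : 1 ≤ R.assign t) (ha2 : R.assign t ≤ R.nbins (t - 1)) (g : γ) :
    R.binsOfColor t g + (if R.bcolor (t - 1) (R.assign t) = g then 1 else 0) =
      R.binsOfColor (t - 1) g + (if c t = g then 1 else 0) := by
  have hmem : R.assign t ∈ Finset.Icc 1 (R.nbins (t - 1)) := Finset.mem_Icc.2 ⟨ha1, ha2⟩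
  unfold binsOfColor
  rw [heq, Finset.card_filter, Finset.card_filter,
    ← Finset.sum_erase_add _ _ hmem, ← Finset.sum_erase_add _ _ hmem]
  have hsum : ∀ i ∈ (Finset.Icc 1 (R.nbins (t - 1))).erase (R.assign t),
      (if R.bcolor t i = g then (1 : ℕ) else 0) = (if R.bcolor (t - 1) i = g then 1 else 0) := by
    intro i hi
    rw [R.bcolor_step t h1 h2 i, if_neg (Finset.mem_erase.1 hi).1]
  rw [Finset.sum_congr rfl hsum, R.bcolor_step t h1 h2 (R.assign t), if_pos rfl]
  ring

end BaPRun

/-- if at every time during phase `m` (for `2 ≤ m ≤ k−1`) there are at least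
`(m+1)/2` pseudo-bins of color `X_{m+1}`, then `X_m = X_{m+1}`, and if `t` is the number of
items of color `X_m` in phase `m` then phase `m` contains exactly `t − 1` items of other
colors. -/
theorem bap_same_color_phase {γ : Type*} [DecidableEq γ] (n : ℕ) (c : ℕ → γ)
    (R : BaPRun n c) (m : ℕ) (hm2 : 2 ≤ m) (hmk : m + 1 ≤ R.nbins n)
    (h : ∀ l, R.Y m ≤ l → l ≤ R.Y (m + 1) - 1 →
      m + 1 ≤ 2 * R.binsOfColor l (c (R.Y (m + 1)))) :
    c (R.Y m) = c (R.Y (m + 1)) ∧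
    ((Finset.Icc (R.Y m) (R.Y (m + 1) - 1)).filter fun l => c l ≠ c (R.Y m)).card + 1 =
      ((Finset.Icc (R.Y m) (R.Y (m + 1) - 1)).filter fun l => c l = c (R.Y m)).card := by
  set g := c (R.Y (m + 1)) with hgdef
  obtain ⟨hY1, hYn, hYp, hYnb, hYa, hYall, hYmin⟩ := R.Y_spec m (by omega) (by omega)
  obtain ⟨hZ1, hZn, hZp, hZnb, hZa, hZall, hZmin⟩ := R.Y_spec (m + 1) (by omega) hmk
  set Ym := R.Y m
  set Ym1 := R.Y (m + 1)
  -- Y m < Y (m+1)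
  have hYlt : Ym < Ym1 := by
    by_contra hc
    push_neg at hc
    have := R.nbins_mono hc hYn
    omega
  -- all bins at time Ym have color c Ym
  have hallY : ∀ i, 1 ≤ i → i ≤ m → R.bcolor Ym i = c Ym := by
    intro i hi1 hi2
    rw [R.bcolor_step Ym hY1 hYn i]
    by_cases hi : i = R.assign Ym
    · rw [if_pos hi]
    · rw [if_neg hi]
      exact hYall i hi1 (by omega)
  -- binsOfColor at time Ym
  have hbY : ∀ g' : γ, R.binsOfColor Ym g' = if g' = c Ym then m else 0 := by
    intro g'
    unfold BaPRun.binsOfColor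
    rw [hYnb]
    by_cases hg' : g' = c Ym
    · rw [if_pos hg', Finset.filter_true_of_mem, Nat.card_Icc]
      · omega
      · intro i hi
        rw [hallY i (Finset.mem_Icc.1 hi).1 (Finset.mem_Icc.1 hi).2, hg']
    · rw [if_neg hg', Finset.filter_false_of_mem, Finset.card_empty]
      intro i hi
      rw [hallY i (Finset.mem_Icc.1 hi).1 (Finset.mem_Icc.1 hi).2]
      exact fun hh => hg' hh.symm
  -- Step 1 : g = c Ym
  have hgc : g = c Ym := by
    by_contra hne
    have := h Ym le_rfl (by omega)
    rw [hbY g, if_neg hne] at this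
    omega
  -- nbins is m throughout the phase
  have hnb : ∀ t, Ym ≤ t → t ≤ Ym1 - 1 → R.nbins t = m := by
    intro t ht1 ht2
    have h1 := R.nbins_mono ht1 (by omega)
    have h2 := hZmin t (by omega)
    omega
  -- interior steps take branch 2
  have hbr2 : ∀ t, Ym < t → t ≤ Ym1 - 1 →
      1 ≤ R.assign t ∧ R.assign t ≤ R.nbins (t - 1) ∧ R.nbins t = R.nbins (t - 1) ∧
      R.bcolor (t - 1) (R.assign t) ≠ c t ∧
      ∀ g', g' ≠ c t →
        R.binsOfColor (t - 1) g' ≤ R.binsOfColor (t - 1) (R.bcolor (t - 1) (R.assign t)) := by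
    intro t ht1 ht2
    have hn1 : R.nbins (t - 1) = m := hnb (t - 1) (by omega) (by omega)
    have hn2 : R.nbins t = m := hnb t (by omega) ht2
    rcases R.step t (by omega) (by omega) with ⟨_, hx, _⟩ | ⟨a1, a2, a3, a4, a5⟩
    · omega
    · exact ⟨a1, a2, a3, a4, fun g' hg' => a5 g' hg'⟩
  -- items of another color land on a bin of color g
  have hchosen : ∀ t, Ym < t → t ≤ Ym1 - 1 → c t ≠ g →
      R.bcolor (t - 1) (R.assign t) = g := by
    intro t ht1 ht2 hct
    obtain ⟨a1, a2, a3, a4, a5⟩ := hbr2 t ht1 ht2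
    have hmax := a5 g (fun hh => hct hh.symm)
    by_contra hne
    set h0 := R.bcolor (t - 1) (R.assign t)
    have hn1 : R.nbins (t - 1) = m := hnb (t - 1) (by omega) (by omega)
    have hcnt := h (t - 1) (by omega) (by omega)
    -- disjoint counts
    have hdisj : Disjoint
        ((Finset.Icc 1 (R.nbins (t - 1))).filter fun j => R.bcolor (t - 1) j = g)
        ((Finset.Icc 1 (R.nbins (t - 1))).filter fun j => R.bcolor (t - 1) j = h0) := by
      rw [Finset.disjoint_left]
      intro i hi1 hi2
      rw [Finset.mem_filter] at hi1 hi2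
      exact hne (hi2.2 ▸ hi1.2.symm ▸ rfl)
    have hsum : R.binsOfColor (t - 1) g + R.binsOfColor (t - 1) h0 ≤ m := by
      have := Finset.card_union_of_disjoint hdisj
      have hsub := Finset.union_subset
        (Finset.filter_subset (fun j => R.bcolor (t - 1) j = g) (Finset.Icc 1 (R.nbins (t - 1))))
        (Finset.filter_subset (fun j => R.bcolor (t - 1) j = h0) (Finset.Icc 1 (R.nbins (t - 1))))
      have hcard := Finset.card_le_card hsub
      rw [this] at hcard
      unfold BaPRun.binsOfColor
      have : (Finset.Icc 1 (R.nbins (t - 1))).card = m := by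
        rw [Nat.card_Icc]; omega
      omega
    omega
  -- the main invariant by induction over the phase
  have hind : ∀ t, Ym ≤ t → t ≤ Ym1 - 1 →
      R.binsOfColor t g + ((Finset.Icc (Ym + 1) t).filter fun l => c l ≠ g).card =
        m + ((Finset.Icc (Ym + 1) t).filter fun l => c l = g).card := by
    intro t ht
    induction t, ht using Nat.le_induction with
    | base =>
      intro _
      have hIcc : Finset.Icc (Ym + 1) Ym = ∅ := by
        apply Finset.Icc_eq_empty; omega
      rw [hIcc]
      simp only [Finset.filter_empty, Finset.card_empty, add_zero]
      rw [hbY g, if_pos hgc]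
    | succ t ht ih =>
      intro hle
      have iht := ih (by omega)
      have hIcc : Finset.Icc (Ym + 1) (t + 1) = insert (t + 1) (Finset.Icc (Ym + 1) t) := by
        rw [← Finset.Ico_insert_right (by omega : Ym + 1 ≤ t + 1), Finset.Ico_add_one_right_eq_Icc]
      have hnotmem : t + 1 ∉ Finset.Icc (Ym + 1) t := by
        intro hmem
        have := (Finset.mem_Icc.1 hmem).2
        omega
      obtain ⟨a1, a2, a3, a4, _⟩ := hbr2 (t + 1) (by omega) hle
      have hcs := R.count_step (t + 1) (by omega) (by omega) a3 a1 a2 g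
      simp only [Nat.add_sub_cancel] at hcs a4 ⊢
      by_cases hct : c (t + 1) = g
      · have hold : R.bcolor t (R.assign (t + 1)) ≠ g := by
          rw [← hct] at *; exact a4
        rw [if_neg hold, if_pos hct] at hcs
        rw [hIcc, Finset.filter_insert, Finset.filter_insert, if_pos hct,
          if_neg (by simpa using hct), Finset.card_insert_of_notMem
            (fun hmem => hnotmem (Finset.mem_filter.1 hmem).1)]
        omega
      · have hold : R.bcolor t (R.assign (t + 1)) = g := by
          have := hchosen (t + 1) (by omega) hle hct
          simpa using this
        rw [if_pos hold, if_neg hct] at hcs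
        rw [hIcc, Finset.filter_insert, Finset.filter_insert, if_neg hct,
          if_pos (by simpa using hct), Finset.card_insert_of_notMem
            (fun hmem => hnotmem (Finset.mem_filter.1 hmem).1)]
        omega
  -- count at the end of the phase is m
  have hend : R.binsOfColor (Ym1 - 1) g = m := by
    unfold BaPRun.binsOfColor
    have hn1 : R.nbins (Ym1 - 1) = m := by omega
    rw [hn1, Finset.filter_true_of_mem, Nat.card_Icc]
    · omega
    · intro i hi
      rw [Finset.mem_Icc] at hi
      exact hZall i hi.1 (by omega)
  have hfinal := hind (Ym1 - 1) (by omega) le_rfl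
  rw [hend] at hfinal
  refine ⟨hgc.symm, ?_⟩
  rw [← hgc]
  have hIcc : Finset.Icc Ym (Ym1 - 1) = insert Ym (Finset.Icc (Ym + 1) (Ym1 - 1)) := by
    rw [Finset.Icc_add_one_left_eq_Ioc, Finset.Ioc_insert_left (by omega : Ym ≤ Ym1 - 1)]
  have hnotmem : Ym ∉ Finset.Icc (Ym + 1) (Ym1 - 1) := by
    intro hmem
    have := (Finset.mem_Icc.1 hmem).1
    omega
  rw [hIcc, Finset.filter_insert, Finset.filter_insert,
    if_neg (by simp [hgc.symm]), if_pos hgc.symm,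
    Finset.card_insert_of_notMem (fun hmem => hnotmem (Finset.mem_filter.1 hmem).1)]
  omega
end

section
/- Consider any run of BaP and let 2 ≤ m ≤ k−1. If at some time during phase m the number of pseudo-bins of color X_{m+1} is at most m/2, then there exists an index i with Y_m ≤ i ≤ Y_{m+1}−1 such that C(i, Y_{m+1}, X_{m+1}) ≥ (m+4)/4 + (Y_{m+1} − i)/2. -/
section Aux

variable {γ : Type*} [DecidableEq γ] {n : ℕ} {c : ℕ → γ}

lemma BaPRun.nbins_le (R : BaPRun n c) {t : ℕ} (h1 : 1 ≤ t) (h2 : t ≤ n) :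
    R.nbins (t - 1) ≤ R.nbins t := by
  rcases R.step t h1 h2 with ⟨_, h, _⟩ | ⟨_, _, h, _⟩ <;> omega

lemma BaPRun.nbins_mono_s6 (R : BaPRun n c) : ∀ {s t : ℕ}, s ≤ t → t ≤ n →
    R.nbins s ≤ R.nbins t := by
  intro s t hst htn
  induction t with
  | zero =>
    have : s = 0 := Nat.le_zero.mp hst
    simp [this]
  | succ t ih =>
    rcases Nat.lt_or_ge s (t + 1) with h | h
    · have h1 := R.nbins_le (t := t + 1) (by omega) htn
      have h2 := ih (by omega) (by omega)
      simpa using le_trans h2 (by simpa using h1)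
    · have : s = t + 1 := by omega
      simp [this]

lemma BaPRun.assign_le (R : BaPRun n c) {t : ℕ} (h1 : 1 ≤ t) (h2 : t ≤ n) :
    R.assign t ≤ R.nbins t := by
  rcases R.step t h1 h2 with ⟨ha, hn, _⟩ | ⟨_, ha, hn, _⟩ <;> omega

lemma BaPRun.opening (R : BaPRun n c) {M : ℕ} (hM1 : 1 ≤ M) (hMn : M ≤ R.nbins n) :
    1 ≤ R.Y M ∧ R.Y M ≤ n ∧ R.nbins (R.Y M - 1) + 1 = M ∧ R.nbins (R.Y M) = M ∧
      R.assign (R.Y M) = M ∧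
      ∀ j, 1 ≤ j → j ≤ R.nbins (R.Y M - 1) → R.bcolor (R.Y M - 1) j = c (R.Y M) := by
  classical
  have hex : ∃ t, M ≤ R.nbins t ∧ t ≤ n := ⟨n, hMn, le_rfl⟩
  obtain ⟨htM, htn⟩ := Nat.find_spec hex
  set t := Nat.find hex with htdef
  have ht1 : 1 ≤ t := by
    rcases Nat.eq_zero_or_pos t with h | h
    · exfalso; rw [h, R.nbins_zero] at htM; omega
    · exact h
  have htprev : R.nbins (t - 1) < M := by
    have h := Nat.find_min hex (show t - 1 < t by omega)
    simp only [not_and, not_le] at h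
    by_contra hc
    push_neg at hc
    have := h hc
    omega
  have hstep := R.step t ht1 htn
  rcases hstep with ⟨ha, hn, hall⟩ | ⟨_, _, hn, _⟩
  · have hnt : R.nbins t = M := by omega
    have hnprev : R.nbins (t - 1) + 1 = M := by omega
    have hassign : R.assign t = M := by omega
    have hYt : R.Y M = t := by
      have hmem : t ∈ {s | 1 ≤ s ∧ s ≤ n ∧ R.assign s = M} := ⟨ht1, htn, hassign⟩
      have hlb : ∀ s ∈ {s | 1 ≤ s ∧ s ≤ n ∧ R.assign s = M}, t ≤ s := by
        rintro s ⟨hs1, hsn, hsa⟩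
        by_contra hc
        push_neg at hc
        have h1 : R.assign s ≤ R.nbins s := R.assign_le hs1 hsn
        have h2 : R.nbins s ≤ R.nbins (t - 1) := R.nbins_mono_s6 (by omega) (by omega)
        omega
      refine le_antisymm (Nat.sInf_le hmem) ?_
      exact hlb _ (Nat.sInf_mem ⟨t, hmem⟩)
    rw [hYt]
    exact ⟨ht1, htn, hnprev, hnt, hassign, hall⟩
  · exfalso; omega

end Aux

/-- if at some time during phase `m` (for `2 ≤ m ≤ k−1`) there are at most `m/2`
pseudo-bins of color `X_{m+1}`, then there is an index `i` with `Y_m ≤ i ≤ Y_{m+1} − 1` such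
that `C(i, Y_{m+1}, X_{m+1}) ≥ (m+4)/4 + (Y_{m+1} − i)/2`. -/
theorem bap_count_when_few_bins {γ : Type*} [DecidableEq γ] (n : ℕ) (c : ℕ → γ)
    (R : BaPRun n c) (m : ℕ) (hm2 : 2 ≤ m) (hmk : m + 1 ≤ R.nbins n)
    (h : ∃ l, R.Y m ≤ l ∧ l ≤ R.Y (m + 1) - 1 ∧
      2 * R.binsOfColor l (c (R.Y (m + 1))) ≤ m) :
    ∃ i : ℕ, R.Y m ≤ i ∧ i ≤ R.Y (m + 1) - 1 ∧
      ((m : ℝ) + 4) / 4 + ((R.Y (m + 1) : ℝ) - (i : ℝ)) / 2 ≤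
        (cnt c i (R.Y (m + 1)) (c (R.Y (m + 1))) : ℝ) := by
  classical
  obtain ⟨l, hlY, hlY2, hlB⟩ := h
  obtain ⟨hYm1, hYmn, hYmprev, hYmnb, hYma, _⟩ := R.opening (M := m) (by omega) (by omega)
  obtain ⟨hYn1, hYnn, hYnprev, hYnnb, hYna, hYnall⟩ := R.opening (M := m + 1) (by omega) hmk
  set X := c (R.Y (m + 1)) with hX
  set Ym := R.Y m with hYm
  set Yn := R.Y (m + 1) with hYn
  have hYmYn : Ym < Yn := by
    by_contra hc
    push_neg at hc
    have := R.nbins_mono_s6 hc hYmn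
    omega
  have hphase : ∀ t, Ym ≤ t → t ≤ Yn - 1 → R.nbins t = m := by
    intro t h1 h2
    have e1 := R.nbins_mono_s6 h1 (show t ≤ n by omega)
    have e2 := R.nbins_mono_s6 h2 (show Yn - 1 ≤ n by omega)
    omega
  have hBend : R.binsOfColor (Yn - 1) X = m := by
    unfold BaPRun.binsOfColor
    have hnb : R.nbins (Yn - 1) = m := by omega
    rw [hnb, Finset.filter_true_of_mem, Nat.card_Icc]
    · omega
    · intro j hj
      simp only [Finset.mem_Icc] at hj
      exact hYnall j hj.1 (by omega)
  have hevolve : ∀ t, Ym < t → t ≤ Yn - 1 →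
      (c t = X → R.binsOfColor t X = R.binsOfColor (t - 1) X + 1) ∧
      (c t ≠ X → R.binsOfColor t X ≤ R.binsOfColor (t - 1) X ∧
        (m < 2 * R.binsOfColor (t - 1) X →
          R.binsOfColor t X + 1 = R.binsOfColor (t - 1) X)) := by
    intro t h1 h2
    have ht1 : 1 ≤ t := by omega
    have htn : t ≤ n := by omega
    have hnbt : R.nbins t = m := hphase t (by omega) h2
    have hnbt1 : R.nbins (t - 1) = m := hphase (t - 1) (by omega) (by omega)
    rcases R.step t ht1 htn with ⟨_, hn, _⟩ | ⟨ha1, ha2, _, hneq, hmax⟩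
    · exfalso; omega
    · set a := R.assign t with haa
      have haIcc : a ∈ Finset.Icc 1 m := by
        simp only [Finset.mem_Icc]; omega
      have hbc : ∀ j, R.bcolor t j = if j = a then c t else R.bcolor (t - 1) j :=
        R.bcolor_step t ht1 htn
      have hfilt : R.binsOfColor t X =
          ((Finset.Icc 1 m).filter fun j => R.bcolor t j = X).card := by
        unfold BaPRun.binsOfColor; rw [hnbt]
      have hfilt1 : ∀ g : γ, R.binsOfColor (t - 1) g =
          ((Finset.Icc 1 m).filter fun j => R.bcolor (t - 1) j = g).card := by
        intro g; unfold BaPRun.binsOfColor; rw [hnbt1]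
      constructor
      · intro hcX
        rw [hfilt, hfilt1]
        have hset : (Finset.Icc 1 m).filter (fun j => R.bcolor t j = X)
            = insert a ((Finset.Icc 1 m).filter fun j => R.bcolor (t - 1) j = X) := by
          ext j
          simp only [Finset.mem_filter, Finset.mem_insert, hbc j]
          by_cases hj : j = a
          · subst hj; simp [haIcc, hcX]
          · simp [hj]
        rw [hset, Finset.card_insert_of_notMem]
        simp only [Finset.mem_filter, not_and]
        intro _
        rw [← hcX]
        exact hneq
      · intro hcX
        have hset : (Finset.Icc 1 m).filter (fun j => R.bcolor t j = X)
            = ((Finset.Icc 1 m).filter fun j => R.bcolor (t - 1) j = X).erase a := by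
          ext j
          simp only [Finset.mem_filter, Finset.mem_erase, hbc j]
          by_cases hj : j = a
          · subst hj; simp [hcX]
          · simp only [if_neg hj]
            constructor
            · rintro ⟨h1, h2⟩; exact ⟨hj, h1, h2⟩
            · rintro ⟨_, h1, h2⟩; exact ⟨h1, h2⟩
        constructor
        · rw [hfilt, hfilt1, hset]
          exact Finset.card_erase_le
        · intro hbig
          rw [hfilt1] at hbig
          have hsel : R.bcolor (t - 1) a = X := by
            by_contra hg
            have hm' := hmax X (Ne.symm hcX)
            rw [hnbt1] at hm'
            have hdisj : Disjoint ((Finset.Icc 1 m).filter fun j => R.bcolor (t - 1) j = X)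
                ((Finset.Icc 1 m).filter fun j =>
                  R.bcolor (t - 1) j = R.bcolor (t - 1) a) := by
              rw [Finset.disjoint_left]
              intro j hj1 hj2
              simp only [Finset.mem_filter] at hj1 hj2
              exact hg (hj2.2 ▸ hj1.2 ▸ rfl)
            have hsub : (((Finset.Icc 1 m).filter fun j => R.bcolor (t - 1) j = X) ∪
                ((Finset.Icc 1 m).filter fun j =>
                  R.bcolor (t - 1) j = R.bcolor (t - 1) a)) ⊆ Finset.Icc 1 m :=
              Finset.union_subset (Finset.filter_subset _ _) (Finset.filter_subset _ _)
            have hcu := Finset.card_union_of_disjoint hdisj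
            have hle := Finset.card_le_card hsub
            have hIcc : (Finset.Icc 1 m).card = m := by
              rw [Nat.card_Icc]; omega
            omega
          have hmem : a ∈ (Finset.Icc 1 m).filter fun j => R.bcolor (t - 1) j = X := by
            simp only [Finset.mem_filter]
            exact ⟨haIcc, hsel⟩
          rw [hfilt, hfilt1, hset, Finset.card_erase_of_mem hmem]
          have : 1 ≤ ((Finset.Icc 1 m).filter fun j => R.bcolor (t - 1) j = X).card :=
            Finset.card_pos.mpr ⟨a, hmem⟩
          omega
  -- the last low time i0
  have hlS : l ∈ (Finset.Icc l (Yn - 1)).filter (fun t => 2 * R.binsOfColor t X ≤ m) := by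
    simp only [Finset.mem_filter, Finset.mem_Icc]
    exact ⟨⟨le_rfl, hlY2⟩, hlB⟩
  have hSne : ((Finset.Icc l (Yn - 1)).filter
      (fun t => 2 * R.binsOfColor t X ≤ m)).Nonempty := ⟨l, hlS⟩
  obtain ⟨i0, hi0mem, hi0max⟩ :
      ∃ i0 ∈ (Finset.Icc l (Yn - 1)).filter (fun t => 2 * R.binsOfColor t X ≤ m),
        ∀ t ∈ (Finset.Icc l (Yn - 1)).filter (fun t => 2 * R.binsOfColor t X ≤ m),
          t ≤ i0 :=
    ⟨_, Finset.max'_mem _ hSne, fun t ht => Finset.le_max' _ t ht⟩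
  simp only [Finset.mem_filter, Finset.mem_Icc] at hi0mem
  obtain ⟨⟨hli0, hi0Yn⟩, hi0B⟩ := hi0mem
  have hmaxS : ∀ t, i0 < t → t ≤ Yn - 1 → m < 2 * R.binsOfColor t X := by
    intro t h1 h2
    by_contra hc
    push_neg at hc
    have htS : t ∈ (Finset.Icc l (Yn - 1)).filter (fun t => 2 * R.binsOfColor t X ≤ m) := by
      simp only [Finset.mem_filter, Finset.mem_Icc]
      exact ⟨⟨by omega, h2⟩, hc⟩
    have := hi0max t htS
    omega
  have hi0lt : i0 < Yn - 1 := by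
    rcases Nat.lt_or_ge i0 (Yn - 1) with h | h
    · exact h
    · exfalso
      have : i0 = Yn - 1 := by omega
      rw [this, hBend] at hi0B
      omega
  -- invariant
  have hinv : ∀ t, i0 ≤ t → t ≤ Yn - 1 →
      R.binsOfColor t X + (t - i0) = R.binsOfColor i0 X + 2 * cnt c (i0 + 1) t X := by
    intro t ht
    induction t, ht using Nat.le_induction with
    | base =>
      intro _
      have hc0 : cnt c (i0 + 1) i0 X = 0 := by
        unfold cnt
        rw [Finset.Icc_eq_empty (by omega)]
        simp
      simp [hc0]
    | succ t ht ih =>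
      intro hty
      have hty' : t ≤ Yn - 1 := by omega
      have ihv := ih hty'
      have hins : Finset.Icc (i0 + 1) (t + 1) = insert (t + 1) (Finset.Icc (i0 + 1) t) := by
        ext x
        simp only [Finset.mem_Icc, Finset.mem_insert]
        omega
      have hcnt : cnt c (i0 + 1) (t + 1) X
          = cnt c (i0 + 1) t X + (if c (t + 1) = X then 1 else 0) := by
        unfold cnt
        rw [hins, Finset.filter_insert]
        by_cases hcc : c (t + 1) = X
        · have hnotmem : t + 1 ∉ (Finset.Icc (i0 + 1) t).filter fun l => c l = X := by
            intro hmm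
            simp only [Finset.mem_filter, Finset.mem_Icc] at hmm
            exact absurd hmm.1.2 (by omega)
          rw [if_pos hcc, if_pos hcc, Finset.card_insert_of_notMem hnotmem]
        · rw [if_neg hcc, if_neg hcc]
          omega
      obtain ⟨hinc, hdec⟩ := hevolve (t + 1) (by omega) hty
      simp only [Nat.add_sub_cancel] at hinc hdec
      by_cases hcX : c (t + 1) = X
      · have hv := hinc hcX
        rw [hcnt, if_pos hcX]
        omega
      · obtain ⟨hle, hd⟩ := hdec hcX
        have hbig : m < 2 * R.binsOfColor (t + 1) X := hmaxS (t + 1) (by omega) hty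
        have hv := hd (by omega)
        rw [hcnt, if_neg hcX]
        omega
  have hfin := hinv (Yn - 1) (by omega) le_rfl
  rw [hBend] at hfin
  have hcntfull : cnt c (i0 + 1) Yn X = cnt c (i0 + 1) (Yn - 1) X + 1 := by
    unfold cnt
    have hins : Finset.Icc (i0 + 1) Yn = insert Yn (Finset.Icc (i0 + 1) (Yn - 1)) := by
      ext x
      simp only [Finset.mem_Icc, Finset.mem_insert]
      omega
    rw [hins, Finset.filter_insert, if_pos hX.symm, Finset.card_insert_of_notMem]
    intro hmm
    simp only [Finset.mem_filter, Finset.mem_Icc] at hmm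
    omega
  refine ⟨i0 + 1, by omega, by omega, ?_⟩
  have hkey : m + 2 * (Yn - 1 - i0) ≤ 4 * cnt c (i0 + 1) (Yn - 1) X := by omega
  set D := Yn - 1 - i0 with hD
  have hYnD : Yn = i0 + 1 + D := by omega
  have hkeyR : (m : ℝ) + 2 * (D : ℝ) ≤ 4 * (cnt c (i0 + 1) (Yn - 1) X : ℝ) := by
    exact_mod_cast hkey
  have hcntR : (cnt c (i0 + 1) Yn X : ℝ) = (cnt c (i0 + 1) (Yn - 1) X : ℝ) + 1 := by
    exact_mod_cast hcntfull
  have hYnDR : (Yn : ℝ) = (i0 : ℝ) + 1 + (D : ℝ) := by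
    exact_mod_cast hYnD
  rw [hcntR, hYnDR]
  push_cast
  linarith
end

section
/- For any run of BaP on a colorful bin packing instance, the final number k of pseudo-bins satisfies LB_1 ≥ (k+1)/2. -/
/-- The potential function. -/
def BaPRun.phi {n : ℕ} {γ : Type*} [DecidableEq γ] {c : ℕ → γ}
    (R : BaPRun n c) (g : γ) (t : ℕ) : ℤ :=
  2 * (R.binsOfColor t g : ℤ) - (R.nbins t : ℤ)

lemma key_card {γ : Type*} [DecidableEq γ] (m a : ℕ) (f : ℕ → γ) (x g : γ)
    (ha : a ∈ Finset.Icc 1 m) :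
    ((Finset.Icc 1 m).filter fun j => (if j = a then x else f j) = g).card
      + (if f a = g then 1 else 0)
    = ((Finset.Icc 1 m).filter fun j => f j = g).card + (if x = g then 1 else 0) := by
  classical
  rw [Finset.card_filter, Finset.card_filter, ← Finset.add_sum_erase _ _ ha,
      ← Finset.add_sum_erase _ _ ha]
  have h1 : ∀ j ∈ (Finset.Icc 1 m).erase a,
      (if (if j = a then x else f j) = g then 1 else 0) = (if f j = g then (1:ℕ) else 0) := by
    intro j hj
    rw [if_neg (Finset.ne_of_mem_erase hj)]
  rw [Finset.sum_congr rfl h1]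
  simp only [if_true]
  split_ifs <;> omega

/-- In case 1 (a new bin is opened at time `t`), all bins at times `t-1` and `t` are
colored `c t`. -/
lemma bins_case1 {n : ℕ} {γ : Type*} [DecidableEq γ] {c : ℕ → γ} (R : BaPRun n c)
    (t : ℕ) (h1 : 1 ≤ t) (h2 : t ≤ n)
    (ha : R.assign t = R.nbins (t - 1) + 1) (hnb : R.nbins t = R.nbins (t - 1) + 1)
    (hall : ∀ j, 1 ≤ j → j ≤ R.nbins (t - 1) → R.bcolor (t - 1) j = c t) :
    (∀ g, R.binsOfColor t g = if c t = g then R.nbins t else 0) ∧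
    (∀ g, R.binsOfColor (t-1) g = if c t = g then R.nbins (t-1) else 0) := by
  classical
  have hct : ∀ j, 1 ≤ j → j ≤ R.nbins t → R.bcolor t j = c t := by
    intro j hj1 hj2
    rw [R.bcolor_step t h1 h2 j]
    split
    · rfl
    · rename_i hja
      exact hall j hj1 (by omega)
  constructor
  · intro g
    unfold BaPRun.binsOfColor
    split
    · rename_i hg
      rw [Finset.filter_true_of_mem (fun j hj => by
        rw [hct j (Finset.mem_Icc.mp hj).1 (Finset.mem_Icc.mp hj).2]; exact hg)]
      simp [Nat.card_Icc]
    · rename_i hg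
      rw [Finset.filter_false_of_mem (fun j hj => by
        rw [hct j (Finset.mem_Icc.mp hj).1 (Finset.mem_Icc.mp hj).2]; exact hg)]
      simp
  · intro g
    unfold BaPRun.binsOfColor
    split
    · rename_i hg
      rw [Finset.filter_true_of_mem (fun j hj => by
        rw [hall j (Finset.mem_Icc.mp hj).1 (Finset.mem_Icc.mp hj).2]; exact hg)]
      simp [Nat.card_Icc]
    · rename_i hg
      rw [Finset.filter_false_of_mem (fun j hj => by
        rw [hall j (Finset.mem_Icc.mp hj).1 (Finset.mem_Icc.mp hj).2]; exact hg)]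
      simp

lemma phi_step {n : ℕ} {γ : Type*} [DecidableEq γ] {c : ℕ → γ} (R : BaPRun n c)
    (g : γ) (t : ℕ) (h1 : 1 ≤ t) (h2 : t ≤ n) :
    (c t = g → R.phi g t ≤ R.phi g (t-1) + 2) ∧
    (c t ≠ g → 1 ≤ R.phi g t → R.phi g t ≤ R.phi g (t-1) - 2) := by
  classical
  rcases R.step t h1 h2 with ⟨ha, hnb, hall⟩ | ⟨ha1, ha2, hnb, hne, hmax⟩
  · obtain ⟨hBt, hBt1⟩ := bins_case1 R t h1 h2 ha hnb hall
    constructor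
    · intro hg
      unfold BaPRun.phi
      rw [hBt g, hBt1 g, if_pos hg, if_pos hg, hnb]
      push_cast
      ring_nf
      omega
    · intro hg hphi
      exfalso
      unfold BaPRun.phi at hphi
      rw [hBt g, if_neg hg] at hphi
      omega
  · -- case 2
    have hfe : ((Finset.Icc 1 (R.nbins (t-1))).filter fun j => R.bcolor t j = g)
        = ((Finset.Icc 1 (R.nbins (t-1))).filter fun j =>
            (if j = R.assign t then c t else R.bcolor (t-1) j) = g) := by
      apply Finset.filter_congr
      intro j _
      rw [R.bcolor_step t h1 h2 j]
    have hkey := key_card (R.nbins (t-1)) (R.assign t) (R.bcolor (t-1)) (c t) g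
      (Finset.mem_Icc.mpr ⟨ha1, ha2⟩)
    have hB : R.binsOfColor t g + (if R.bcolor (t-1) (R.assign t) = g then 1 else 0)
        = R.binsOfColor (t-1) g + (if c t = g then 1 else 0) := by
      unfold BaPRun.binsOfColor
      rw [hnb, hfe]
      exact hkey
    constructor
    · intro hg
      have hne' : R.bcolor (t-1) (R.assign t) ≠ g := fun h => hne (h.trans hg.symm)
      rw [if_neg hne', if_pos hg] at hB
      unfold BaPRun.phi
      rw [hnb]
      omega
    · intro hg hphi
      rw [if_neg hg] at hB
      by_cases hb : R.bcolor (t-1) (R.assign t) = g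
      · rw [if_pos hb] at hB
        unfold BaPRun.phi
        rw [hnb]
        omega
      · exfalso
        rw [if_neg hb] at hB
        have hle := hmax g (Ne.symm hg)
        -- disjointness
        have hdisj : Disjoint
            ((Finset.Icc 1 (R.nbins (t-1))).filter fun j => R.bcolor (t-1) j = g)
            ((Finset.Icc 1 (R.nbins (t-1))).filter fun j =>
              R.bcolor (t-1) j = R.bcolor (t-1) (R.assign t)) := by
          rw [Finset.disjoint_left]
          intro x hx hx'
          simp only [Finset.mem_filter] at hx hx'
          exact hb (hx'.2.symm.trans hx.2)
        have hsum : R.binsOfColor (t-1) g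
            + ((Finset.Icc 1 (R.nbins (t-1))).filter fun j =>
                R.bcolor (t-1) j = R.bcolor (t-1) (R.assign t)).card ≤ R.nbins (t-1) := by
          unfold BaPRun.binsOfColor
          rw [← Finset.card_union_of_disjoint hdisj]
          calc _ ≤ (Finset.Icc 1 (R.nbins (t-1))).card :=
                Finset.card_le_card (Finset.union_subset (Finset.filter_subset _ _)
                  (Finset.filter_subset _ _))
            _ = R.nbins (t-1) := by simp [Nat.card_Icc]
        unfold BaPRun.phi at hphi
        rw [hnb] at hphi
        have : R.binsOfColor (t-1) g ≤
            ((Finset.Icc 1 (R.nbins (t-1))).filter fun j =>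
              R.bcolor (t-1) j = R.bcolor (t-1) (R.assign t)).card := hle
        omega

lemma cnt_succ {γ : Type*} [DecidableEq γ] (c : ℕ → γ) (i j : ℕ) (g : γ) (h : i ≤ j + 1) :
    cnt c i (j+1) g = cnt c i j g + if c (j+1) = g then 1 else 0 := by
  classical
  have hIcc : Finset.Icc i (j+1) = insert (j+1) (Finset.Icc i j) := by
    ext x; simp only [Finset.mem_Icc, Finset.mem_insert]; omega
  have hnot : (j+1) ∉ Finset.Icc i j := by simp [Finset.mem_Icc]
  unfold cnt
  rw [hIcc, Finset.filter_insert]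
  split
  · rw [Finset.card_insert_of_notMem (fun hm => hnot (Finset.mem_of_mem_filter _ hm))]
  · rw [Nat.add_zero]


/-- for any run of BaP on a nonempty instance, with `k` pseudo-bins at the end,
`LB_1 ≥ (k+1)/2`, i.e. there are `1 ≤ i ≤ j ≤ n` and a color `g` with
`2·C(i,j,g) − (j − i + 1) ≥ (k+1)/2`. -/
theorem bap_LB_one_ge {γ : Type*} [DecidableEq γ] (n : ℕ) (hn : 1 ≤ n) (c : ℕ → γ)
    (R : BaPRun n c) :
    ∃ i j : ℕ, ∃ g : γ, 1 ≤ i ∧ i ≤ j ∧ j ≤ n ∧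
      ((R.nbins n : ℝ) + 1) / 2 ≤ 2 * (cnt c i j g : ℝ) - ((j : ℝ) - (i : ℝ) + 1) := by
  classical
  -- item 1 opens a bin
  have h1S : R.nbins 1 = R.nbins (1-1) + 1 := by
    rcases R.step 1 le_rfl hn with ⟨_, h, _⟩ | ⟨h1, h2, _⟩
    · exact h
    · exfalso; rw [R.nbins_zero] at h2; omega
  set S : Finset ℕ := (Finset.Icc 1 n).filter (fun t => R.nbins t = R.nbins (t-1) + 1) with hS
  have h1mem : 1 ∈ S := by
    rw [hS, Finset.mem_filter, Finset.mem_Icc]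
    exact ⟨⟨le_rfl, hn⟩, h1S⟩
  have hSne : S.Nonempty := ⟨1, h1mem⟩
  set s := S.max' hSne with hsdef
  have hsmem : s ∈ S := S.max'_mem hSne
  rw [hS, Finset.mem_filter, Finset.mem_Icc] at hsmem
  obtain ⟨⟨hs1, hsn⟩, hsopen⟩ := hsmem
  -- step s is a case-1 step
  obtain ⟨has, hnbs, halls⟩ : R.assign s = R.nbins (s-1) + 1 ∧
      R.nbins s = R.nbins (s-1) + 1 ∧
      ∀ j, 1 ≤ j → j ≤ R.nbins (s-1) → R.bcolor (s-1) j = c s := by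
    rcases R.step s hs1 hsn with h | ⟨_, _, h, _, _⟩
    · exact h
    · exfalso; omega
  -- nbins is constant on [s, n]
  have hconst : ∀ t, s ≤ t → t ≤ n → R.nbins t = R.nbins s := by
    intro t ht
    induction t, ht using Nat.le_induction with
    | base => intro _; rfl
    | succ t ht ih =>
      intro htn
      rcases R.step (t+1) (by omega) htn with ⟨_, h, _⟩ | ⟨_, _, h, _, _⟩
      · exfalso
        have hmem : t+1 ∈ S := by
          rw [hS, Finset.mem_filter, Finset.mem_Icc]
          exact ⟨⟨by omega, htn⟩, h⟩
        have := S.le_max' _ hmem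
        omega
      · have h' : R.nbins (t+1) = R.nbins t := by simpa using h
        rw [h', ih (by omega)]
  -- phi at time 0
  have hphi0 : R.phi (c s) 0 = 0 := by
    unfold BaPRun.phi BaPRun.binsOfColor
    rw [R.nbins_zero]
    simp
  -- last time before s with nonpositive potential
  set F : Finset ℕ := (Finset.Icc 0 (s-1)).filter (fun v => R.phi (c s) v ≤ 0) with hF
  have h0F : 0 ∈ F := by
    rw [hF, Finset.mem_filter, Finset.mem_Icc]
    exact ⟨⟨le_rfl, Nat.zero_le _⟩, le_of_eq hphi0⟩
  have hFne : F.Nonempty := ⟨0, h0F⟩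
  set u := F.max' hFne with hudef
  have huF : u ∈ F := F.max'_mem hFne
  rw [hF, Finset.mem_filter, Finset.mem_Icc] at huF
  obtain ⟨⟨-, hu_le⟩, hu_phi⟩ := huF
  have hmaxu : ∀ v, u < v → v ≤ s - 1 → 1 ≤ R.phi (c s) v := by
    intro v hv hv'
    by_contra hle
    have hv0 : R.phi (c s) v ≤ 0 := by omega
    have hmem : v ∈ F := by
      rw [hF, Finset.mem_filter, Finset.mem_Icc]
      exact ⟨⟨Nat.zero_le _, hv'⟩, hv0⟩
    have := F.le_max' v hmem
    omega
  -- the main induction on the potential over [u, s-1]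
  have hind : ∀ j, u ≤ j → j ≤ s - 1 →
      R.phi (c s) j ≤ 4 * (cnt c (u+1) j (c s) : ℤ) - 2 * ((j:ℤ) - (u:ℤ)) := by
    intro j hj
    induction j, hj using Nat.le_induction with
    | base =>
      intro _
      have hc0 : cnt c (u+1) u (c s) = 0 := by
        unfold cnt
        rw [Finset.Icc_eq_empty (by omega)]
        simp
      rw [hc0]
      push_cast
      omega
    | succ j hj ih =>
      intro hle
      have ihv := ih (by omega)
      have hst := phi_step R (c s) (j+1) (by omega) (by omega)
      simp only [Nat.add_sub_cancel] at hst
      have hcnt := cnt_succ c (u+1) j (c s) (by omega)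
      by_cases hcg : c (j+1) = c s
      · have h2 := hst.1 hcg
        rw [hcnt, if_pos hcg]
        push_cast
        omega
      · have h1 := hmaxu (j+1) (by omega) hle
        have h2 := hst.2 hcg h1
        rw [hcnt, if_neg hcg]
        push_cast
        omega
  have hA := hind (s-1) hu_le le_rfl
  -- potential just before s equals the number of bins
  have hBs : R.binsOfColor (s-1) (c s) = R.nbins (s-1) := by
    unfold BaPRun.binsOfColor
    rw [Finset.filter_true_of_mem (fun j hj =>
      halls j (Finset.mem_Icc.mp hj).1 (Finset.mem_Icc.mp hj).2)]
    simp [Nat.card_Icc]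
  have hphis : R.phi (c s) (s-1) = R.nbins (s-1) := by
    unfold BaPRun.phi
    rw [hBs]
    ring
  have hss : s - 1 + 1 = s := by omega
  have hcnts : cnt c (u+1) s (c s) = cnt c (u+1) (s-1) (c s) + 1 := by
    have h := cnt_succ c (u+1) (s-1) (c s) (by omega)
    rw [hss] at h
    rw [h, if_pos rfl]
  have hk : R.nbins n = R.nbins (s-1) + 1 := by
    rw [hconst n (le_refl s |>.trans (by omega)) le_rfl, hnbs]
  refine ⟨u+1, s, c s, by omega, by omega, hsn, ?_⟩
  rw [div_le_iff₀ (by norm_num : (0:ℝ) < 2)]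
  have hfin : (R.nbins n : ℤ) + 1 ≤
      (2 * (cnt c (u+1) s (c s) : ℤ) - ((s:ℤ) - ((u:ℤ)+1) + 1)) * 2 := by
    rw [hk, hcnts]
    rw [hphis] at hA
    push_cast
    omega
  push_cast
  exact_mod_cast hfin
end

section
/- For every colorful bin packing instance in which all items have size 0, and every run of BaP on it, the number of bins used by BaP (which equals the final number k of pseudo-bins) satisfies k ≤ 2·LB_1 − 1 < 2·OPT. In other words, the absolute competitive ratio of BaP restricted to zero-size items is at most 2. -/
/-- Number of further bins opened by Next Fit on the list `l` of item sizes when the current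
bin already has load `load`. -/
noncomputable def nfExtra : List ℝ → ℝ → ℕ
  | [], _ => 0
  | a :: l, load => if load + a ≤ 1 then nfExtra l (load + a) else 1 + nfExtra l a

/-- Number of bins used by Next Fit on the list `l` of item sizes. -/
noncomputable def nfBins : List ℝ → ℕ
  | [] => 0
  | a :: l => 1 + nfExtra l a

/-- The total number of (actual) bins used by the run `R` of BaP: the items of each pseudo-bin
are split into bins, in order, by Next Fit. -/
noncomputable def bapCost {n : ℕ} {γ : Type*} [DecidableEq γ] {c : ℕ → γ}
    (s : ℕ → ℝ) (R : BaPRun n c) : ℕ :=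
  ∑ j ∈ Finset.Icc 1 (R.nbins n),
    nfBins ((((Finset.Icc 1 n).filter fun t => R.assign t = j).sort (· ≤ ·)).map s)

/-!
Write `D_g(t) = 2·#(pseudo-bins of color g) − #(pseudo-bins)` after `t` items. While `D_g > 0`,
color `g` is a strict majority among the pseudo-bins, so the balancing rule sends every item of
another color to a pseudo-bin of color `g` and `D_g` drops by `2`; an item of color `g` raises it
by at most `2`. Hence if `m` is the last time with `D_g(m) ≤ 0`, then `D_g(b) ≤ 2·LB(m+1, b, g)`.
When the last pseudo-bin is opened by an item `t` of color `g`, the `k − 1` others all have color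
`g`, so `k − 1 = D_g(t−1) ≤ 2·LB(m+1, t−1, g) = 2·LB(m+1, t, g) − 2`.

Conversely, two items of color `g` that are consecutive in a bin of a packing are separated by an
item of another color, so each bin holds at most one more item of color `g` among `i, …, j` than
items of other colors; summing over the bins gives `LB(i, j, g) ≤ OPT`.
-/

open Finset

theorem Finset.card_filter_Icc_add_one {p : ℕ → Prop} [DecidablePred p] {i j : ℕ}
    (h : i ≤ j + 1) :
    #{x ∈ Icc i (j + 1) | p x} = #{x ∈ Icc i j | p x} + if p (j + 1) then 1 else 0 := by
  rw [← insert_Icc_right_eq_Icc_add_one h, filter_insert]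
  split_ifs
  · exact card_insert_of_notMem (by simp)
  · rfl

theorem Finset.card_filter_update_add {α β : Type*} [DecidableEq α] [DecidableEq β]
    {s : Finset α} {a : α} (ha : a ∈ s) (h : α → β) (v g : β) :
    #{x ∈ s | Function.update h a v x = g} + (if h a = g then 1 else 0) =
      #{x ∈ s | h x = g} + if v = g then 1 else 0 := by
  rw [← insert_erase ha, filter_insert, filter_insert, Function.update_self]
  have hrest : {x ∈ s.erase a | Function.update h a v x = g} = {x ∈ s.erase a | h x = g} :=
    filter_congr fun x hx => by rw [Function.update_of_ne (ne_of_mem_erase hx)]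
  have hnot : ∀ q : α → Prop, [DecidablePred q] → a ∉ {x ∈ s.erase a | q x} := by simp
  rw [hrest]
  split_ifs <;> simp only [card_insert_of_notMem (hnot _)]

theorem Finset.card_filter_eq_add_card_filter_eq_le {α β : Type*} [DecidableEq β]
    (s : Finset α) (h : α → β) {g₁ g₂ : β} (hne : g₁ ≠ g₂) :
    #{x ∈ s | h x = g₁} + #{x ∈ s | h x = g₂} ≤ #s := by
  rw [← card_filter_add_card_filter_not (s := s) (fun x => h x = g₁)]
  gcongr 1
  exact card_le_card <| monotone_filter_right s fun x _ (hx : h x = g₂) => hx ▸ hne.symm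

theorem Finset.two_mul_card_filter_le_card_add_one {α : Type*} [LinearOrder α]
    {S : Finset α} {p : α → Prop} [DecidablePred p]
    (h : ∀ x ∈ S, ∀ y ∈ S, x < y → p x → p y → ∃ z ∈ S, x < z ∧ z < y) :
    2 * #{x ∈ S | p x} ≤ #S + 1 := by
  suffices key : 2 * #{x ∈ S | p x} ≤ #S + 1 ∧
      ∀ a ∈ S, (∀ x ∈ S, x ≤ a) → ¬ p a → 2 * #{x ∈ S | p x} ≤ #S from key.1
  induction S using Finset.induction_on_max with
  | empty => simp
  | insert a s hlt ih =>
    have has : a ∉ s := fun ha => (hlt a ha).false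
    have hs : ∀ x ∈ s, ∀ y ∈ s, x < y → p x → p y → ∃ z ∈ s, x < z ∧ z < y := by
      intro x hx y hy hxy hpx hpy
      obtain ⟨z, hz, hxz, hzy⟩ := h x (mem_insert_of_mem hx) y (mem_insert_of_mem hy) hxy hpx hpy
      rcases mem_insert.mp hz with rfl | hz
      · exact absurd (hlt y hy) hzy.not_gt
      · exact ⟨z, hz, hxz, hzy⟩
    obtain ⟨ih₁, ih₂⟩ := ih hs
    rw [filter_insert, card_insert_of_notMem has]
    by_cases hpa : p a
    · have hmax : 2 * #{x ∈ s | p x} ≤ #s := by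
        rcases s.eq_empty_or_nonempty with rfl | hne
        · simp
        refine ih₂ _ (s.max'_mem hne) (fun x hx => s.le_max' x hx) fun hpm => ?_
        obtain ⟨z, hz, hmz, hza⟩ := h _ (mem_insert_of_mem (s.max'_mem hne)) a
          (mem_insert_self a s) (hlt _ (s.max'_mem hne)) hpm hpa
        rcases mem_insert.mp hz with rfl | hz
        · exact hza.false
        · exact (s.le_max' z hz).not_gt hmz
      rw [if_pos hpa, card_insert_of_notMem fun hm => has (mem_filter.mp hm).1]
      refine ⟨by omega, fun b hb hbmax hpb => ?_⟩
      rcases mem_insert.mp hb with rfl | hb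
      · exact absurd hpa hpb
      · exact absurd (hbmax a (mem_insert_self a s)) (hlt b hb).not_ge
    · rw [if_neg hpa]
      exact ⟨by omega, fun _ _ _ _ => by omega⟩

lemma nfExtra_map_const_zero {α : Type*} (l : List α) {load : ℝ} (hload : load ≤ 1) :
    nfExtra (l.map fun _ => 0) load = 0 := by
  induction l with
  | nil => rfl
  | cons a l ih => simpa only [List.map_cons, nfExtra, add_zero, if_pos hload] using ih

lemma nfBins_map_const_zero {α : Type*} {l : List α} (hl : l ≠ []) :
    nfBins (l.map fun _ => 0) = 1 := by
  obtain ⟨a, l, rfl⟩ := List.exists_cons_of_ne_nil hl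
  simp only [List.map_cons, nfBins, nfExtra_map_const_zero l zero_le_one]

lemma isPacking_id {γ : Type*} {n : ℕ} {s : ℕ → ℝ} (hs : ∀ t, s t ≤ 1) (c : ℕ → γ) :
    IsPacking n n s c id := by
  refine ⟨fun t h1 h2 => ⟨h1, h2⟩, fun b => ?_, fun x y _ hxy _ hfxy _ => absurd hfxy hxy.ne⟩
  simp only [id, filter_eq']
  split_ifs
  · simpa using hs b
  · simp

section LowerBound

variable {γ : Type*} [DecidableEq γ]

/-- The paper's `LB(i,j,c)`. -/
def lb (c : ℕ → γ) (i j : ℕ) (g : γ) : ℤ := 2 * (cnt c i j g : ℤ) - ((j : ℤ) - (i : ℤ) + 1)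

lemma lb_self_succ (c : ℕ → γ) (j : ℕ) (g : γ) : lb c (j + 1) j g = 0 := by
  simp [lb, cnt]

lemma lb_succ (c : ℕ → γ) {i j : ℕ} (h : i ≤ j + 1) (g : γ) :
    lb c i (j + 1) g = lb c i j g + if c (j + 1) = g then 1 else -1 := by
  have hcnt : cnt c i (j + 1) g = cnt c i j g + if c (j + 1) = g then 1 else 0 :=
    card_filter_Icc_add_one h
  simp only [lb, hcnt]
  split_ifs <;> push_cast <;> ring

lemma IsPacking.two_mul_cnt_le_s9 {n L : ℕ} {s : ℕ → ℝ} {c : ℕ → γ} {f : ℕ → ℕ}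
    (hp : IsPacking n L s c f) {i j : ℕ} (hi : 1 ≤ i) (hj : j ≤ n) (g : γ) :
    2 * cnt c i j g ≤ #(Icc i j) + L := by
  have hf : ∀ x ∈ Icc i j, f x ∈ Icc 1 L := fun x hx => by
    rw [mem_Icc] at hx ⊢; exact hp.1 x (hi.trans hx.1) (hx.2.trans hj)
  -- in each bin, no two items of color `g` follow each other
  have hbin : ∀ b, 2 * #{x ∈ Icc i j | f x = b ∧ c x = g} ≤ #{x ∈ Icc i j | f x = b} + 1 := by
    intro b
    rw [← filter_filter]
    refine two_mul_card_filter_le_card_add_one fun x hx y hy hxy hcx hcy => ?_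
    simp only [mem_filter, mem_Icc] at hx hy
    by_contra! hnone
    refine hp.2.2 x y (hi.trans hx.1.1) hxy (hy.1.2.trans hj) (hx.2.trans hy.2.symm)
      (fun l hxl hly hfl => ?_) (hcx.trans hcy.symm)
    exact (hnone l (by simp only [mem_filter, mem_Icc]; omega) hxl).not_gt hly
  calc 2 * cnt c i j g
      = ∑ b ∈ Icc 1 L, 2 * #{x ∈ Icc i j | f x = b ∧ c x = g} := by
        rw [← mul_sum, cnt, card_eq_sum_card_fiberwise fun x hx => hf x (mem_filter.mp hx).1]
        simp only [filter_filter, and_comm]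
    _ ≤ ∑ b ∈ Icc 1 L, (#{x ∈ Icc i j | f x = b} + 1) := sum_le_sum fun b _ => hbin b
    _ = #(Icc i j) + L := by
        rw [sum_add_distrib, ← card_eq_sum_card_fiberwise hf]; simp

lemma IsPacking.lb_le {n L : ℕ} {s : ℕ → ℝ} {c : ℕ → γ} {f : ℕ → ℕ}
    (hp : IsPacking n L s c f) {i j : ℕ} (hi : 1 ≤ i) (hij : i ≤ j + 1) (hj : j ≤ n) (g : γ) :
    lb c i j g ≤ L := by
  have := hp.two_mul_cnt_le_s9 hi hj g
  rw [Nat.card_Icc] at this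
  unfold lb
  omega

lemma lb_le_OPTcost {n : ℕ} {s : ℕ → ℝ} (hs : ∀ t, s t ≤ 1) (c : ℕ → γ) {i j : ℕ}
    (hi : 1 ≤ i) (hij : i ≤ j + 1) (hj : j ≤ n) (g : γ) : lb c i j g ≤ OPTcost n s c := by
  obtain ⟨f, hf⟩ : ∃ f, IsPacking n (OPTcost n s c) s c f :=
    Nat.sInf_mem (s := {L | ∃ f, IsPacking n L s c f}) ⟨n, id, isPacking_id hs c⟩
  exact hf.lb_le hi hij hj g

end LowerBound

namespace BaPRun

variable {γ : Type*} [DecidableEq γ] {n : ℕ} {c : ℕ → γ} (R : BaPRun n c)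

lemma one_le_nbins {t : ℕ} (h1 : 1 ≤ t) (h2 : t ≤ n) : 1 ≤ R.nbins t := by
  rcases R.step t h1 h2 with ⟨-, h, -⟩ | ⟨ha, ha', h, -⟩ <;> omega

lemma exists_opening_step {T : ℕ} (hT : T ≤ n) {j : ℕ} (hj1 : 1 ≤ j) (hj2 : j ≤ R.nbins T) :
    ∃ t, 1 ≤ t ∧ t ≤ T ∧ R.assign t = j ∧ R.nbins (t - 1) + 1 = j ∧
      ∀ b, 1 ≤ b → b ≤ R.nbins (t - 1) → R.bcolor (t - 1) b = c t := by
  induction T with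
  | zero => rw [R.nbins_zero] at hj2; omega
  | succ T ih =>
    by_cases hjT : j ≤ R.nbins T
    · obtain ⟨t, ht1, htT, h⟩ := ih (by omega) hjT
      exact ⟨t, ht1, by omega, h⟩
    rcases R.step (T + 1) (by omega) hT with ⟨ha, hb, hall⟩ | ⟨-, -, hb, -⟩
    · refine ⟨T + 1, by omega, le_rfl, ?_⟩
      simp only [Nat.add_sub_cancel] at ha hb hall ⊢
      exact ⟨by omega, by omega, hall⟩
    · simp only [Nat.add_sub_cancel] at hb; omega

lemma bapCost_zero : bapCost (fun _ => 0) R = R.nbins n := by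
  have hone : ∀ j ∈ Icc 1 (R.nbins n),
      nfBins ((({t ∈ Icc 1 n | R.assign t = j}).sort (· ≤ ·)).map fun _ => (0 : ℝ)) = 1 := by
    intro j hj
    obtain ⟨t, ht1, htn, hta, -⟩ :=
      R.exists_opening_step le_rfl (mem_Icc.mp hj).1 (mem_Icc.mp hj).2
    refine nfBins_map_const_zero fun hnil => ?_
    have hmem : t ∈ ({t ∈ Icc 1 n | R.assign t = j}).sort (· ≤ ·) := by
      simp [mem_sort, ht1, htn, hta]
    simp [hnil] at hmem
  rw [bapCost, sum_congr rfl hone, sum_const, Nat.card_Icc, smul_eq_mul, mul_one,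
    Nat.add_sub_cancel]

lemma bcolor_eq_update {t : ℕ} (h1 : 1 ≤ t) (h2 : t ≤ n) :
    R.bcolor t = Function.update (R.bcolor (t - 1)) (R.assign t) (c t) := by
  funext j
  rw [R.bcolor_step t h1 h2, Function.update_apply]

lemma binsOfColor_of_open {t : ℕ} (h1 : 1 ≤ t) (h2 : t ≤ n)
    (ha : R.assign t = R.nbins (t - 1) + 1) (hb : R.nbins t = R.nbins (t - 1) + 1) (g : γ) :
    R.binsOfColor t g = R.binsOfColor (t - 1) g + if c t = g then 1 else 0 := by
  have hupd := card_filter_update_add (s := Icc 1 (R.nbins (t - 1) + 1))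
    (right_mem_Icc.mpr (Nat.le_add_left 1 _)) (R.bcolor (t - 1)) (c t) g
  rw [card_filter_Icc_add_one (p := fun x => R.bcolor (t - 1) x = g) (Nat.le_add_left 1 _)]
    at hupd
  rw [binsOfColor, binsOfColor, hb, R.bcolor_eq_update h1 h2, ha]
  omega

lemma binsOfColor_of_reuse {t : ℕ} (h1 : 1 ≤ t) (h2 : t ≤ n) (ha1 : 1 ≤ R.assign t)
    (ha2 : R.assign t ≤ R.nbins (t - 1)) (hb : R.nbins t = R.nbins (t - 1)) (g : γ) :
    R.binsOfColor t g + (if R.bcolor (t - 1) (R.assign t) = g then 1 else 0) =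
      R.binsOfColor (t - 1) g + if c t = g then 1 else 0 := by
  rw [binsOfColor, binsOfColor, hb, R.bcolor_eq_update h1 h2]
  exact card_filter_update_add (mem_Icc.mpr ⟨ha1, ha2⟩) _ _ _

def imbalance (g : γ) (t : ℕ) : ℤ := 2 * (R.binsOfColor t g : ℤ) - R.nbins t

lemma imbalance_zero (g : γ) : R.imbalance g 0 = 0 := by
  simp [imbalance, binsOfColor, R.nbins_zero]

lemma imbalance_step {t : ℕ} (h1 : 1 ≤ t) (h2 : t ≤ n) (g : γ) (hpos : 0 < R.imbalance g t) :
    R.imbalance g t ≤ R.imbalance g (t - 1) + if c t = g then 2 else -2 := by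
  unfold imbalance at hpos ⊢
  rcases R.step t h1 h2 with ⟨ha, hb, hall⟩ | ⟨ha1, ha2, hb, -, hmax⟩
  · have hcount := R.binsOfColor_of_open h1 h2 ha hb g
    by_cases hg : c t = g
    · simp only [hg, if_true] at hcount ⊢
      omega
    · have hnone : R.binsOfColor (t - 1) g = 0 :=
        card_eq_zero.mpr <| filter_eq_empty_iff.mpr fun b hb' => by
          rw [mem_Icc] at hb'
          rw [hall b hb'.1 hb'.2]
          exact hg
      simp only [hg, if_false] at hcount
      omega
  · have hcount := R.binsOfColor_of_reuse h1 h2 ha1 ha2 hb g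
    by_cases hg : c t = g
    · simp only [hg, if_true] at hcount ⊢
      split_ifs at hcount <;> omega
    by_cases hg' : R.bcolor (t - 1) (R.assign t) = g
    · simp only [hg, hg', if_true, if_false] at hcount ⊢
      omega
    -- `g` is no more frequent than the chosen color `≠ g`, so the imbalance was and stays `≤ 0`
    have hle : R.binsOfColor (t - 1) g ≤ _ := hmax g (Ne.symm hg)
    have hsum : R.binsOfColor (t - 1) g + _ ≤ _ := card_filter_eq_add_card_filter_eq_le
      (Icc 1 (R.nbins (t - 1))) (R.bcolor (t - 1)) (Ne.symm hg')
    simp only [hg, hg', if_false, Nat.card_Icc] at hcount hsum ⊢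
    omega

lemma exists_imbalance_le_lb (g : γ) {b : ℕ} (hb : b ≤ n) :
    ∃ m ≤ b, R.imbalance g b ≤ 2 * lb c (m + 1) b g := by
  induction b with
  | zero => exact ⟨0, le_rfl, by simp [imbalance_zero, lb_self_succ]⟩
  | succ b ih =>
    by_cases hpos : R.imbalance g (b + 1) ≤ 0
    · exact ⟨b + 1, le_rfl, by rwa [lb_self_succ, mul_zero]⟩
    obtain ⟨m, hmb, hm⟩ := ih (by omega)
    have hstep := R.imbalance_step (Nat.le_add_left 1 b) hb g (by omega)
    rw [Nat.add_sub_cancel] at hstep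
    refine ⟨m, by omega, ?_⟩
    rw [lb_succ c (by omega)]
    split_ifs at hstep ⊢ <;> omega

lemma exists_nbins_le_two_mul_lb_sub_one (hn : 1 ≤ n) :
    ∃ i j : ℕ, ∃ g : γ, 1 ≤ i ∧ i ≤ j ∧ j ≤ n ∧ (R.nbins n : ℤ) ≤ 2 * lb c i j g - 1 := by
  -- when the last pseudo-bin was opened, all other pseudo-bins had the color of item `t`
  obtain ⟨t, ht1, htn, -, hprev, hall⟩ :=
    R.exists_opening_step le_rfl (R.one_le_nbins hn le_rfl) le_rfl
  have hbins : R.binsOfColor (t - 1) (c t) = R.nbins (t - 1) := by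
    rw [binsOfColor, filter_true_of_mem fun b hb => hall b (mem_Icc.mp hb).1 (mem_Icc.mp hb).2,
      Nat.card_Icc, Nat.add_sub_cancel]
  obtain ⟨m, hm, hle⟩ := R.exists_imbalance_le_lb (c t) (b := t - 1) (by omega)
  have hlb := lb_succ c (i := m + 1) (j := t - 1) (by omega) (c t)
  rw [Nat.sub_add_cancel ht1, if_pos rfl] at hlb
  refine ⟨m + 1, t, c t, by omega, by omega, htn, ?_⟩
  rw [imbalance, hbins] at hle
  omega

end BaPRun

/-- on every (nonempty) instance whose items all have size `0`, every run of BaP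
uses exactly `k` bins, where `k` is the final number of pseudo-bins, and
`k ≤ 2·LB_1 − 1 < 2·OPT` (the first inequality says some `i, j, g` realize it, the second
holds for all `i, j, g` since `LB_1` is the maximum): the absolute competitive ratio of BaP on
zero-size items is at most `2`. -/
theorem bap_zero_size_lt_two_OPT {γ : Type*} [DecidableEq γ] (n : ℕ) (hn : 1 ≤ n)
    (c : ℕ → γ) (R : BaPRun n c) :
    bapCost (fun _ => (0 : ℝ)) R = R.nbins n ∧
    (∃ i j : ℕ, ∃ g : γ, 1 ≤ i ∧ i ≤ j ∧ j ≤ n ∧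
      (R.nbins n : ℤ) ≤ 2 * (2 * (cnt c i j g : ℤ) - ((j : ℤ) - (i : ℤ) + 1)) - 1) ∧
    (∀ i j : ℕ, ∀ g : γ, 1 ≤ i → i ≤ j → j ≤ n →
      2 * (2 * (cnt c i j g : ℤ) - ((j : ℤ) - (i : ℤ) + 1)) - 1 <
        2 * (OPTcost n (fun _ => (0 : ℝ)) c : ℤ)) := by
  refine ⟨R.bapCost_zero, R.exists_nbins_le_two_mul_lb_sub_one hn, fun i j g hi hij hj => ?_⟩
  have hOPT := lb_le_OPTcost (fun _ => zero_le_one) c hi (by omega) hj g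
  unfold lb at hOPT
  omega
end

section
/- For every integer N ≥ 2, with M = 4^{N+1}, m = (3/4)^N·M, and any 0 < ε < 1/(8M), there exists a colorful bin packing instance with OPT = M on which every run of BaP uses at least 4M − m bins. The instance is: the zero-size three-color input of N phases (phase 0 of M white items; phase i of a_i·M/2 red, (1 − a_i/2)·M blue, and M white items, with a_i = 2 − (3/4)^{i−1}), followed by 2M − m − 1 items of pairwise distinct new colors (none equal to white, red, blue, or black) each of size 2ε, then M − 1 black items each of size 1 − ε, then M − 2 items of pairwise distinct new colors each of size 2ε. Consequently, the asymptotic competitive ratio of BaP is at least 4. -/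
/-!
Write `M = 4 ^ (N + 1)`. The instance opens with `2 N + 3` blocks of `M` zero-size items. They
cost nothing, but they steer BaP into `2 M - 3 ^ (N + 1)` pseudo-bins that are all white: in each
colorful block the red items recolor half of the white pseudo-bins and the blue items spread
evenly over white and red ones, so the following white block recolors only part of the
pseudo-bins and its remaining items open new ones.

The items of size `2 ε` with private colors then go one to each white pseudo-bin but the last.
Each black item goes to a pseudo-bin ending with such a small item, except at most once, and
each final small item goes to a pseudo-bin ending with a black item. Next Fit opens a new bin for
every item that does not fit together with its predecessor in the pseudo-bin, so BaP uses at
least `(2 M - 3 ^ (N + 1)) + 2 (M - 2) ≥ 4 M - 4 * 3 ^ N` bins. On the other hand the small items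
fit into one bin and the black items into `M - 1` more, with the zero-size items dealt out
cyclically so that consecutive items of a bin come from adjacent blocks; by volume, `OPT = M`.
-/

-- `a` is the item packed last, so it lies in the current bin, whose load is `load`.
theorem countP_zip_le_nfExtra :
    ∀ (l : List ℝ) (a load : ℝ), (∀ x ∈ l, 0 ≤ x) → 0 ≤ load → a ≤ load →
      ((a :: l).zip l).countP (fun p => 1 < p.1 + p.2) ≤ nfExtra l load
  | [], _, _, _, _, _ => by simp
  | b :: l, a, load, hl, hload, ha => by
    have hb : 0 ≤ b := hl b List.mem_cons_self
    have hl' : ∀ x ∈ l, 0 ≤ x := fun x hx => hl x (List.mem_cons_of_mem b hx)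
    have ih := countP_zip_le_nfExtra l b
    rw [List.zip_cons_cons, List.countP_cons, nfExtra]
    by_cases hfit : load + b ≤ 1
    · have hlight : ¬ 1 < a + b := by linarith
      rw [if_pos hfit]
      simpa [hlight] using ih (load + b) hl' (by linarith) (by linarith)
    · rw [if_neg hfit]
      have := ih b hl' hb le_rfl
      split_ifs <;> omega

theorem card_filter_exists_pred_le_countP_zip (p : ℕ → ℕ → Prop) [DecidableRel p] :
    ∀ l : List ℕ, l.Pairwise (· < ·) →
      (l.toFinset.filter fun t => ∃ u ∈ l, u < t ∧ (∀ v ∈ l, v < t → v ≤ u) ∧ p u t).card ≤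
        (l.zip l.tail).countP (fun q => p q.1 q.2)
  | [], _ => by simp
  | [x], _ => by simp
  | x :: y :: l, hl => by
    simp only [List.pairwise_cons, List.mem_cons, forall_eq_or_imp] at hl
    obtain ⟨⟨hxy, hxl⟩, ⟨hyl, hl⟩⟩ := hl
    have ih := card_filter_exists_pred_le_countP_zip p (y :: l) (List.pairwise_cons.2 ⟨hyl, hl⟩)
    rw [List.tail_cons, List.zip_cons_cons, List.countP_cons]
    set rest := (y :: l).toFinset.filter
      fun t => ∃ u ∈ y :: l, u < t ∧ (∀ v ∈ y :: l, v < t → v ≤ u) ∧ p u t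
    have hsub : (x :: y :: l).toFinset.filter
        (fun t => ∃ u ∈ x :: y :: l, u < t ∧ (∀ v ∈ x :: y :: l, v < t → v ≤ u) ∧ p u t) ⊆
          if p x y then insert y rest else rest := by
      intro t ht
      simp only [Finset.mem_filter, List.mem_toFinset, List.mem_cons] at ht
      obtain ⟨htl, u, hu, hut, hmax, hp⟩ := ht
      have hxt : x ≠ t := by
        rintro rfl
        rcases hu with rfl | rfl | hu <;> grind
      by_cases hyt : t = y
      · subst hyt
        have hux : u = x := by rcases hu with rfl | rfl | hu <;> grind
        subst hux
        simp [hp]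
      · have hrest : t ∈ rest := by
          have hyu : y ≤ u := hmax y (by simp) (by grind)
          simp only [rest, Finset.mem_filter, List.mem_toFinset, List.mem_cons]
          refine ⟨by grind, u, by grind, hut, fun v hv => hmax v (by simp_all), hp⟩
        split_ifs <;> simp [hrest]
    rw [List.tail_cons] at ih
    split_ifs at hsub with hp
    · simp only [hp, decide_true, if_true]
      exact (Finset.card_le_card hsub).trans ((Finset.card_insert_le _ _).trans (by omega))
    · simp only [hp, decide_false, Bool.false_eq_true, if_false]
      exact (Finset.card_le_card hsub).trans (by omega)

theorem one_add_card_filter_exists_pred_le_nfBins (S : Finset ℕ) (hS : S.Nonempty) (s : ℕ → ℝ)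
    (hs : ∀ t ∈ S, 0 ≤ s t) :
    1 + (S.filter fun t => ∃ u ∈ S, u < t ∧ (∀ v ∈ S, v < t → v ≤ u) ∧ 1 < s u + s t).card ≤
      nfBins ((S.sort (· ≤ ·)).map s) := by
  have hbridge := card_filter_exists_pred_le_countP_zip (fun u t => 1 < s u + s t) (S.sort (· ≤ ·))
    (Finset.sortedLT_sort S).pairwise
  simp only [Finset.sort_toFinset, Finset.mem_sort] at hbridge
  obtain ⟨a, l, hal⟩ : ∃ a l, S.sort (· ≤ ·) = a :: l :=
    List.exists_cons_of_ne_nil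
      (List.ne_nil_of_length_pos (by rw [Finset.length_sort]; exact hS.card_pos))
  rw [hal] at hbridge ⊢
  have hnf := countP_zip_le_nfExtra (l.map s) (s a) (s a)
    (fun x hx => by
      obtain ⟨t, ht, rfl⟩ := List.mem_map.1 hx
      exact hs t (by simp [← Finset.mem_sort (· ≤ ·), hal, ht]))
    (hs a (by simp [← Finset.mem_sort (· ≤ ·), hal])) le_rfl
  rw [← List.map_cons, List.zip_map, List.countP_map] at hnf
  rw [List.map_cons, nfBins]
  have : (fun q : ℕ × ℕ => decide (1 < s q.1 + s q.2)) =
      (fun p : ℝ × ℝ => decide (1 < p.1 + p.2)) ∘ Prod.map s s := rfl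
  rw [List.tail_cons, this] at hbridge
  omega

theorem IsPacking.sum_le {γ : Type*} {n L : ℕ} {s : ℕ → ℝ} {c : ℕ → γ} {f : ℕ → ℕ}
    (hf : IsPacking n L s c f) : ∑ t ∈ Finset.Icc 1 n, s t ≤ L := by
  rw [← Finset.sum_fiberwise_of_maps_to (g := f) (t := Finset.Icc 1 L) fun t ht => by
    rw [Finset.mem_Icc] at ht ⊢
    exact hf.1 t ht.1 ht.2]
  calc ∑ b ∈ Finset.Icc 1 L, ∑ t ∈ (Finset.Icc 1 n).filter (fun t => f t = b), s t
      ≤ ∑ _b ∈ Finset.Icc 1 L, (1 : ℝ) := Finset.sum_le_sum fun b _ => hf.2.1 b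
    _ = L := by simp

theorem OPTcost_eq_of_sub_one_lt_sum {γ : Type*} {n m : ℕ} {s : ℕ → ℝ} {c : ℕ → γ} {f : ℕ → ℕ}
    (hf : IsPacking n m s c f) (hvol : (m : ℝ) - 1 < ∑ t ∈ Finset.Icc 1 n, s t) :
    OPTcost n s c = m := by
  refine le_antisymm (Nat.sInf_le ⟨f, hf⟩) (le_csInf ⟨m, f, hf⟩ ?_)
  rintro L ⟨g, hg⟩
  have : (m : ℝ) < L + 1 := by linarith [hg.sum_le]
  exact_mod_cast Nat.lt_add_one_iff.1 (by exact_mod_cast this)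

namespace BaPRun

variable {n : ℕ} {γ : Type*} [DecidableEq γ] {c : ℕ → γ} (R : BaPRun n c)

def hostColor (t : ℕ) : γ := R.bcolor t (R.assign (t + 1))

-- Steps are indexed by the state they start from: item `t + 1` arrives after `t` items.
structure Places (t : ℕ) : Prop where
  assign_pos : 1 ≤ R.assign (t + 1)
  assign_le : R.assign (t + 1) ≤ R.nbins t
  nbins_succ : R.nbins (t + 1) = R.nbins t
  hostColor_ne : R.hostColor t ≠ c (t + 1)
  binsOfColor_le : ∀ g, g ≠ c (t + 1) → R.binsOfColor t g ≤ R.binsOfColor t (R.hostColor t)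

structure Opens (t : ℕ) : Prop where
  assign_eq : R.assign (t + 1) = R.nbins t + 1
  nbins_succ : R.nbins (t + 1) = R.nbins t + 1
  bcolor_eq : ∀ j, 1 ≤ j → j ≤ R.nbins t → R.bcolor t j = c (t + 1)

theorem opens_or_places {t : ℕ} (ht : t < n) : R.Opens t ∨ R.Places t := by
  rcases R.step (t + 1) (Nat.le_add_left 1 t) ht with ⟨h₁, h₂, h₃⟩ | ⟨h₁, h₂, h₃, h₄, h₅⟩
  · exact Or.inl ⟨h₁, h₂, h₃⟩
  · exact Or.inr ⟨h₁, h₂, h₃, h₄, h₅⟩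

theorem bcolor_succ {t : ℕ} (ht : t < n) (j : ℕ) :
    R.bcolor (t + 1) j = if j = R.assign (t + 1) then c (t + 1) else R.bcolor t j :=
  R.bcolor_step (t + 1) (Nat.le_add_left 1 t) ht j

theorem nbins_le_nbins {t t' : ℕ} (htt' : t ≤ t') (ht' : t' ≤ n) : R.nbins t ≤ R.nbins t' := by
  induction t', htt' using Nat.le_induction with
  | base => rfl
  | succ t' _ ih =>
    refine (ih (by omega)).trans ?_
    rcases R.opens_or_places ht' with h | h
    · rw [h.nbins_succ]; omega
    · rw [h.nbins_succ]

theorem assign_mem_Icc {t : ℕ} (ht₁ : 1 ≤ t) (ht : t ≤ n) :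
    R.assign t ∈ Finset.Icc 1 (R.nbins n) := by
  obtain ⟨t, rfl⟩ : ∃ t', t = t' + 1 := ⟨t - 1, by omega⟩
  have := R.nbins_le_nbins ht le_rfl
  rw [Finset.mem_Icc]
  rcases R.opens_or_places ht with h | h
  · have := h.assign_eq; have := h.nbins_succ; omega
  · have := h.assign_le; have := h.assign_pos; have := h.nbins_succ; omega

theorem exists_last_item {t j : ℕ} (ht : t ≤ n) (hj : 1 ≤ j) (hjt : j ≤ R.nbins t) :
    ∃ u, 1 ≤ u ∧ u ≤ t ∧ R.assign u = j ∧ (∀ v ≤ t, R.assign v = j → v ≤ u) ∧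
      R.bcolor t j = c u := by
  induction t with
  | zero => rw [R.nbins_zero] at hjt; omega
  | succ t ih =>
    by_cases hja : j = R.assign (t + 1)
    · refine ⟨t + 1, by omega, le_rfl, hja.symm, fun v hv _ => hv, ?_⟩
      simp [R.bcolor_succ ht, hja]
    · have hjt' : j ≤ R.nbins t := by
        rcases R.opens_or_places ht with h | h
        · have := h.assign_eq; have := h.nbins_succ; omega
        · have := h.nbins_succ; omega
      obtain ⟨u, hu₁, hut, hu, hlast, hcol⟩ := ih (by omega) hjt'
      refine ⟨u, hu₁, by omega, hu, fun v hv hvj => ?_, by rw [R.bcolor_succ ht, if_neg hja, hcol]⟩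
      rcases Nat.lt_or_ge v (t + 1) with hv' | hv'
      · exact hlast v (by omega) hvj
      · obtain rfl : v = t + 1 := by omega
        exact absurd hvj.symm hja

theorem binsOfColor_succ_add_of_places {t : ℕ} (ht : t < n) (hp : R.Places t) (g : γ) :
    R.binsOfColor (t + 1) g + (if R.hostColor t = g then 1 else 0) =
      R.binsOfColor t g + (if c (t + 1) = g then 1 else 0) := by
  have ha : R.assign (t + 1) ∈ Finset.Icc 1 (R.nbins t) :=
    Finset.mem_Icc.2 ⟨hp.assign_pos, hp.assign_le⟩
  simp only [binsOfColor, hp.nbins_succ, Finset.card_filter, R.bcolor_succ ht]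
  rw [← Finset.add_sum_erase _ _ ha, ← Finset.add_sum_erase _ _ ha,
    Finset.sum_congr rfl fun j hj => by rw [if_neg (Finset.ne_of_mem_erase hj)]]
  simp only [if_true, hostColor]
  ac_rfl

theorem binsOfColor_succ_of_opens {t : ℕ} (ht : t < n) (ho : R.Opens t) (g : γ) :
    R.binsOfColor (t + 1) g = if c (t + 1) = g then R.nbins (t + 1) else 0 := by
  have hall : ∀ j ∈ Finset.Icc 1 (R.nbins (t + 1)), R.bcolor (t + 1) j = c (t + 1) := by
    intro j hj
    rw [Finset.mem_Icc, ho.nbins_succ] at hj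
    rw [R.bcolor_succ ht]
    split_ifs with hja
    · rfl
    · exact ho.bcolor_eq j hj.1 (by have := ho.assign_eq; omega)
  unfold binsOfColor
  split_ifs with hg
  · rw [Finset.filter_true_of_mem fun j hj => (hall j hj).trans hg, Nat.card_Icc]; omega
  · rw [Finset.filter_false_of_mem fun j hj => (hall j hj).symm ▸ hg, Finset.card_empty]

theorem binsOfColor_succ_le {t : ℕ} (ht : t < n) {g : γ} (hg : c (t + 1) ≠ g) :
    R.binsOfColor (t + 1) g ≤ R.binsOfColor t g := by
  rcases R.opens_or_places ht with ho | hp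
  · simp [R.binsOfColor_succ_of_opens ht ho, hg]
  · have := R.binsOfColor_succ_add_of_places ht hp g
    rw [if_neg hg] at this
    omega

theorem places_of_binsOfColor_pos {t : ℕ} (ht : t < n) {g : γ} (hg : g ≠ c (t + 1))
    (hpos : 0 < R.binsOfColor t g) : R.Places t := by
  refine (R.opens_or_places ht).resolve_left fun ho => ?_
  obtain ⟨j, hj⟩ := Finset.card_pos.1 hpos
  simp only [Finset.mem_filter, Finset.mem_Icc] at hj
  exact hg (hj.2.symm.trans (ho.bcolor_eq j hj.1.1 hj.1.2))

section

variable {R}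

theorem Places.binsOfColor_hostColor_pos {t : ℕ} (hp : R.Places t) :
    0 < R.binsOfColor t (R.hostColor t) :=
  Finset.card_pos.2 ⟨R.assign (t + 1), Finset.mem_filter.2
    ⟨Finset.mem_Icc.2 ⟨hp.assign_pos, hp.assign_le⟩, rfl⟩⟩

theorem Places.hostColor_eq_of_forall_lt {t : ℕ} (hp : R.Places t) {g : γ}
    (hg : g ≠ c (t + 1))
    (hlt : ∀ h, h ≠ c (t + 1) → h ≠ g → R.binsOfColor t h < R.binsOfColor t g) :
    R.hostColor t = g := by
  by_contra hne
  exact absurd (hp.binsOfColor_le g hg) (not_le.2 (hlt _ hp.hostColor_ne hne))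

end

theorem binsOfColor_add_binsOfColor_le (t : ℕ) {g h : γ} (hgh : g ≠ h) :
    R.binsOfColor t g + R.binsOfColor t h ≤ R.nbins t := by
  unfold binsOfColor
  rw [← Finset.card_union_of_disjoint
    (Finset.disjoint_filter.2 fun _ _ h₁ h₂ => hgh (h₁.symm.trans h₂))]
  exact (Finset.card_le_card (Finset.union_subset (Finset.filter_subset _ _)
    (Finset.filter_subset _ _))).trans (by simp)

theorem binsOfColor_eq_zero_of_eq_nbins {t : ℕ} {g : γ} (hg : R.binsOfColor t g = R.nbins t)
    {h : γ} (hgh : g ≠ h) : R.binsOfColor t h = 0 := by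
  have := R.binsOfColor_add_binsOfColor_le t hgh
  omega

theorem exists_binsOfColor_pos_of_lt {t : ℕ} {g : γ} (hg : R.binsOfColor t g < R.nbins t) :
    ∃ h, h ≠ g ∧ 0 < R.binsOfColor t h := by
  obtain ⟨j, hj, hjg⟩ : ∃ j ∈ Finset.Icc 1 (R.nbins t), R.bcolor t j ≠ g := by
    by_contra! hall
    rw [binsOfColor, Finset.filter_true_of_mem hall, Nat.card_Icc] at hg
    omega
  exact ⟨R.bcolor t j, hjg, Finset.card_pos.2 ⟨j, Finset.mem_filter.2 ⟨hj, rfl⟩⟩⟩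

theorem binsOfColor_add_binsOfColor_eq (t : ℕ) {g h : γ} (hgh : g ≠ h)
    (hrest : ∀ x, x ≠ g → x ≠ h → R.binsOfColor t x = 0) :
    R.binsOfColor t g + R.binsOfColor t h = R.nbins t := by
  unfold binsOfColor
  rw [← Finset.card_union_of_disjoint
      (Finset.disjoint_filter.2 fun _ _ h₁ h₂ => hgh (h₁.symm.trans h₂)), ← Finset.filter_or,
    Finset.filter_true_of_mem, Nat.card_Icc]
  · omega
  intro j hj
  by_contra! hne
  have hpos : 0 < R.binsOfColor t (R.bcolor t j) :=
    Finset.card_pos.2 ⟨j, Finset.mem_filter.2 ⟨hj, rfl⟩⟩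
  exact hpos.ne' (hrest _ hne.1 hne.2)

theorem binsOfColor_eq_zero_of_forall_ne {t : ℕ} (ht : t ≤ n) {g : γ}
    (hfresh : ∀ v, 1 ≤ v → v ≤ t → c v ≠ g) : R.binsOfColor t g = 0 := by
  refine Finset.card_eq_zero.2 (Finset.filter_eq_empty_iff.2 fun j hj hjg => ?_)
  rw [Finset.mem_Icc] at hj
  obtain ⟨u, hu₁, hut, -, -, hcol⟩ := R.exists_last_item ht hj.1 hj.2
  exact hfresh u hu₁ hut (hcol ▸ hjg)

theorem places_of_binsOfColor_lt {t : ℕ} (ht : t < n) {g : γ} (hg : c (t + 1) = g)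
    (hlt : R.binsOfColor t g < R.nbins t) : R.Places t := by
  obtain ⟨h, hhg, hpos⟩ := R.exists_binsOfColor_pos_of_lt hlt
  exact R.places_of_binsOfColor_pos ht (hg ▸ hhg) hpos

theorem places_and_hostColor_eq_of_dominant {t : ℕ} (ht : t < n) {g : γ} (hg : g ≠ c (t + 1))
    (hdom : 2 ≤ R.binsOfColor t g) (hle : ∀ h, h ≠ g → R.binsOfColor t h ≤ 1) :
    R.Places t ∧ R.hostColor t = g := by
  have hp := R.places_of_binsOfColor_pos ht hg (by omega)
  exact ⟨hp, hp.hostColor_eq_of_forall_lt hg fun h _ hhg => (hle h hhg).trans_lt hdom⟩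

theorem opens_block {u L : ℕ} {g : γ} (hL : u + L ≤ n) (hc : ∀ j < L, c (u + j + 1) = g)
    (hmono : R.binsOfColor u g = R.nbins u) :
    R.nbins (u + L) = R.nbins u + L ∧ R.binsOfColor (u + L) g = R.nbins (u + L) := by
  induction L with
  | zero => exact ⟨rfl, hmono⟩
  | succ L ih =>
    rw [show u + (L + 1) = u + L + 1 from rfl]
    obtain ⟨hnb, hmono'⟩ := ih (by omega) fun j hj => hc j (by omega)
    have ht : u + L < n := by omega
    have ho : R.Opens (u + L) := by
      refine (R.opens_or_places ht).resolve_right fun hp => ?_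
      have hne : R.hostColor (u + L) ≠ g := hc L (by omega) ▸ hp.hostColor_ne
      have := R.binsOfColor_eq_zero_of_eq_nbins hmono' hne.symm
      exact hp.binsOfColor_hostColor_pos.ne' this
    have hcnt := R.binsOfColor_succ_of_opens ht ho g
    rw [if_pos (hc L (by omega))] at hcnt
    exact ⟨by rw [ho.nbins_succ, hnb]; omega, hcnt⟩

theorem places_block {u L : ℕ} {g : γ} (hL : u + L ≤ n) (hc : ∀ j < L, c (u + j + 1) = g)
    (hroom : R.binsOfColor u g + L ≤ R.nbins u) :
    R.nbins (u + L) = R.nbins u ∧ R.binsOfColor (u + L) g = R.binsOfColor u g + L := by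
  induction L with
  | zero => exact ⟨rfl, rfl⟩
  | succ L ih =>
    rw [show u + (L + 1) = u + L + 1 from rfl]
    obtain ⟨hnb, hcnt⟩ := ih (by omega) (fun j hj => hc j (by omega)) (by omega)
    have ht : u + L < n := by omega
    have hp := R.places_of_binsOfColor_lt ht (hc L (by omega)) (by omega)
    have hstep := R.binsOfColor_succ_add_of_places ht hp g
    have hne : R.hostColor (u + L) ≠ g := hc L (by omega) ▸ hp.hostColor_ne
    rw [if_neg hne, if_pos (hc L (by omega))] at hstep
    exact ⟨by rw [hp.nbins_succ, hnb], by omega⟩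

theorem binsOfColor_le_of_forall_ne {u L : ℕ} {g : γ} (hL : u + L ≤ n)
    (hc : ∀ j < L, c (u + j + 1) ≠ g) : R.binsOfColor (u + L) g ≤ R.binsOfColor u g := by
  induction L with
  | zero => rfl
  | succ L ih =>
    rw [show u + (L + 1) = u + L + 1 from rfl]
    exact (R.binsOfColor_succ_le (by omega) (hc L (by omega))).trans
      (ih (by omega) fun j hj => hc j (by omega))

theorem binsOfColor_add_card_hostColor_eq {u L : ℕ} {g : γ} (hL : u + L ≤ n)
    (hc : ∀ j < L, c (u + j + 1) ≠ g) (hp : ∀ j < L, R.Places (u + j)) :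
    R.binsOfColor (u + L) g + ((Finset.range L).filter fun j => R.hostColor (u + j) = g).card =
      R.binsOfColor u g := by
  induction L with
  | zero => simp
  | succ L ih =>
    rw [show u + (L + 1) = u + L + 1 from rfl]
    have hstep := R.binsOfColor_succ_add_of_places (by omega) (hp L (by omega)) g
    rw [if_neg (hc L (by omega))] at hstep
    rw [Finset.range_add_one, Finset.filter_insert]
    have := ih (by omega) (fun j hj => hc j (by omega)) fun j hj => hp j (by omega)
    split_ifs at hstep ⊢ with hhost
    · rw [Finset.card_insert_of_notMem (by simp)]; omega
    · omega

theorem balanced_block {u L : ℕ} {a b g : γ} (hL : u + L ≤ n) (hc : ∀ j < L, c (u + j + 1) = g)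
    (hab : a ≠ b) (hag : a ≠ g) (hbg : b ≠ g)
    (hrest : ∀ x, x ≠ a → x ≠ b → x ≠ g → R.binsOfColor u x = 0)
    (hbal : R.binsOfColor u a ≤ R.binsOfColor u b + 1 ∧
      R.binsOfColor u b ≤ R.binsOfColor u a + 1)
    (hroom : L ≤ R.binsOfColor u a + R.binsOfColor u b) :
    R.binsOfColor (u + L) a + R.binsOfColor (u + L) b + L =
        R.binsOfColor u a + R.binsOfColor u b ∧
      R.binsOfColor (u + L) a ≤ R.binsOfColor (u + L) b + 1 ∧
      R.binsOfColor (u + L) b ≤ R.binsOfColor (u + L) a + 1 := by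
  induction L with
  | zero => simpa using hbal
  | succ L ih =>
    rw [show u + (L + 1) = u + L + 1 from rfl]
    obtain ⟨hsum, hbal'⟩ := ih (by omega) (fun j hj => hc j (by omega)) (by omega)
    have ht : u + L < n := by omega
    have hgc : c (u + L + 1) = g := hc L (by omega)
    have hp : R.Places (u + L) := by
      rcases Nat.eq_zero_or_pos (R.binsOfColor (u + L) a) with ha | ha
      · exact R.places_of_binsOfColor_pos ht (hgc ▸ hbg) (by omega)
      · exact R.places_of_binsOfColor_pos ht (hgc ▸ hag) ha
    have hhost : R.hostColor (u + L) = a ∨ R.hostColor (u + L) = b := by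
      by_contra! hne
      have hzero : R.binsOfColor (u + L) (R.hostColor (u + L)) = 0 :=
        Nat.le_zero.1 <| (R.binsOfColor_le_of_forall_ne (by omega) fun j hj => by
          rw [hc j (by omega)]; exact (hgc ▸ hp.hostColor_ne).symm).trans
          (hrest _ hne.1 hne.2 (hgc ▸ hp.hostColor_ne)).le
      exact hp.binsOfColor_hostColor_pos.ne' hzero
    have hmaxa := hp.binsOfColor_le a (hgc ▸ hag)
    have hmaxb := hp.binsOfColor_le b (hgc ▸ hbg)
    have hsa := R.binsOfColor_succ_add_of_places ht hp a
    have hsb := R.binsOfColor_succ_add_of_places ht hp b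
    rw [hgc, if_neg hag.symm] at hsa
    rw [hgc, if_neg hbg.symm] at hsb
    rcases hhost with hh | hh <;>
      simp only [hh, if_pos, if_neg hab, if_neg hab.symm] at hsa hsb hmaxa hmaxb <;> omega

theorem fresh_block {u L : ℕ} {g : γ} (hL : u + L ≤ n)
    (hfresh : ∀ j < L, ∀ v, 1 ≤ v → v ≤ u + j → c v ≠ c (u + j + 1))
    (hg : ∀ j < L, g ≠ c (u + j + 1)) (hdom : L < R.binsOfColor u g)
    (hle : ∀ h, h ≠ g → R.binsOfColor u h ≤ 1) :
    R.nbins (u + L) = R.nbins u ∧ R.binsOfColor (u + L) g + L = R.binsOfColor u g ∧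
      ∀ h, h ≠ g → R.binsOfColor (u + L) h ≤ 1 := by
  induction L with
  | zero => exact ⟨rfl, rfl, hle⟩
  | succ L ih =>
    rw [show u + (L + 1) = u + L + 1 from rfl]
    obtain ⟨hnb, hcnt, hle'⟩ := ih (by omega) (fun j hj => hfresh j (by omega))
      (fun j hj => hg j (by omega)) (by omega)
    have ht : u + L < n := by omega
    obtain ⟨hp, hhost⟩ := R.places_and_hostColor_eq_of_dominant ht (hg L (by omega)) (by omega) hle'
    have hsg := R.binsOfColor_succ_add_of_places ht hp g
    rw [if_pos hhost, if_neg (hg L (by omega)).symm] at hsg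
    refine ⟨by rw [hp.nbins_succ, hnb], by omega,
      fun h hhg => ?_⟩
    have hsh := R.binsOfColor_succ_add_of_places ht hp h
    rw [if_neg (hhost ▸ hhg.symm : R.hostColor (u + L) ≠ h)] at hsh
    split_ifs at hsh with hch
    · have := R.binsOfColor_eq_zero_of_forall_ne ht.le fun v hv₁ hv₂ =>
        hch ▸ hfresh L (by omega) v hv₁ hv₂
      omega
    · have := hle' h hhg
      omega

open Classical in
noncomputable def overflowItems (s : ℕ → ℝ) : Finset ℕ :=
  (Finset.Icc 1 n).filter fun t => ∃ u ∈ Finset.Icc 1 n, R.assign u = R.assign t ∧ u < t ∧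
    (∀ v ∈ Finset.Icc 1 n, R.assign v = R.assign t → v < t → v ≤ u) ∧ 1 < s u + s t

theorem succ_mem_overflowItems {t : ℕ} (ht : t < n) (hp : R.Places t) {s : ℕ → ℝ}
    (hs : ∀ u, c u = R.hostColor t → 1 < s u + s (t + 1)) : t + 1 ∈ R.overflowItems s := by
  obtain ⟨u, hu₁, hut, hu, hlast, hcol⟩ := R.exists_last_item ht.le hp.assign_pos hp.assign_le
  simp only [overflowItems, Finset.mem_filter, Finset.mem_Icc]
  exact ⟨⟨by omega, ht⟩, u, ⟨hu₁, by omega⟩, hu, by omega,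
    fun v _ hv hvt => hlast v (by omega) hv, hs u hcol.symm⟩

theorem nbins_add_card_overflowItems_le_bapCost {s : ℕ → ℝ}
    (hs : ∀ t ∈ Finset.Icc 1 n, 0 ≤ s t) :
    R.nbins n + (R.overflowItems s).card ≤ bapCost s R := by
  have hmaps : Set.MapsTo R.assign (R.overflowItems s) (Finset.Icc 1 (R.nbins n)) := by
    intro t ht
    simp only [overflowItems, Finset.coe_filter, Finset.mem_Icc] at ht
    exact R.assign_mem_Icc ht.1.1 ht.1.2
  have hone : R.nbins n = ∑ _j ∈ Finset.Icc 1 (R.nbins n), 1 := by simp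
  rw [Finset.card_eq_sum_card_fiberwise hmaps, bapCost]
  nth_rw 1 [hone]
  rw [← Finset.sum_add_distrib]
  refine Finset.sum_le_sum fun j hj => ?_
  rw [Finset.mem_Icc] at hj
  set S := (Finset.Icc 1 n).filter fun t => R.assign t = j
  obtain ⟨u, hu₁, hun, hu, -⟩ := R.exists_last_item le_rfl hj.1 hj.2
  refine le_trans (Nat.add_le_add_left (Finset.card_le_card fun t ht => ?_) 1)
    (one_add_card_filter_exists_pred_le_nfBins S ⟨u, by simp [S, hu₁, hun, hu]⟩ s
      fun t ht => hs t (Finset.mem_of_mem_filter t ht))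
  simp only [overflowItems, Finset.mem_filter] at ht
  obtain ⟨⟨htn, v, hv, hvt, hlt, hlast, hheavy⟩, rfl⟩ := ht
  simp only [S, Finset.mem_filter]
  exact ⟨⟨htn, trivial⟩, v, ⟨hv, hvt⟩, hlt, fun w hw hwt => hlast w hw.1 hw.2 hwt, hheavy⟩

end BaPRun

namespace BaPLowerBound

def optBins (N : ℕ) : ℕ := 4 ^ (N + 1)

def redCount (N k : ℕ) : ℕ := optBins N - 2 * (3 ^ k * 4 ^ (N - k))

def zeroEnd (N : ℕ) : ℕ := optBins N * (2 * N + 3)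

def finalBins (N : ℕ) : ℕ := 2 * optBins N - 3 ^ (N + 1)

def smallEnd (N : ℕ) : ℕ := zeroEnd N + (finalBins N - 1)

def blackEnd (N : ℕ) : ℕ := smallEnd N + (optBins N - 1)

def numItems (N : ℕ) : ℕ := blackEnd N + (optBins N - 2)

/-- Colors: `0` white, `1` red, `2` blue, `3` black, and `t + 4` the private color of item `t`.
The zero-size items come in blocks of `optBins N`; block `q` is white for even `q`, and block
`2 k + 1` is `redCount N k` red items followed by blue ones. -/
def color (N t : ℕ) : ℕ :=
  if t ≤ zeroEnd N then
    if (t - 1) / optBins N % 2 = 0 then 0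
    else if (t - 1) % optBins N < redCount N ((t - 1) / optBins N / 2) then 1 else 2
  else if t ≤ smallEnd N ∨ blackEnd N < t then t + 4 else 3

noncomputable def size (N : ℕ) (ε : ℝ) (t : ℕ) : ℝ :=
  if t ≤ zeroEnd N then 0 else if t ≤ smallEnd N ∨ blackEnd N < t then 2 * ε else 1 - ε

def binsAfterPhase (N k : ℕ) : ℕ := 2 * optBins N - 3 ^ k * 4 ^ (N + 1 - k)

def optPacking (N t : ℕ) : ℕ :=
  if t ≤ zeroEnd N then (t - 1) % optBins N + 1
  else if t ≤ smallEnd N ∨ blackEnd N < t then 1 else t - smallEnd N + 1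

section

variable {N t : ℕ}

theorem optBins_pos : 0 < optBins N := by unfold optBins; positivity

theorem four_le_optBins : 4 ≤ optBins N := Nat.le_self_pow (by omega) 4

theorem optBins_le_finalBins : optBins N ≤ finalBins N := by
  have : 3 ^ (N + 1) ≤ 4 ^ (N + 1) := Nat.pow_le_pow_left (by norm_num) _
  unfold finalBins optBins; omega

theorem four_mul_pow_sub_le (hN : 2 ≤ N) :
    4 * 4 ^ (N + 1) - 4 * 3 ^ N ≤ finalBins N + 2 * (optBins N - 2) := by
  have h9 : 3 ^ 2 ≤ 3 ^ N := Nat.pow_le_pow_right (by norm_num) hN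
  have h34 : 3 ^ (N + 1) ≤ 4 ^ (N + 1) := Nat.pow_le_pow_left (by norm_num) _
  have h4 := four_le_optBins (N := N)
  rw [pow_succ] at h34
  unfold finalBins optBins at *
  rw [pow_succ] at *
  omega

theorem zeroEnd_le_smallEnd : zeroEnd N ≤ smallEnd N := Nat.le_add_right _ _

theorem smallEnd_le_blackEnd : smallEnd N ≤ blackEnd N := Nat.le_add_right _ _

theorem blackEnd_le_numItems : blackEnd N ≤ numItems N := Nat.le_add_right _ _

theorem zeroEnd_le_numItems : zeroEnd N ≤ numItems N := by
  unfold numItems blackEnd smallEnd; omega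

theorem color_zero_part {q p : ℕ} (ht : t = optBins N * q + p + 1) (hq : q < 2 * N + 3)
    (hp : p < optBins N) :
    color N t = if q % 2 = 0 then 0 else if p < redCount N (q / 2) then 1 else 2 := by
  have hM := optBins_pos (N := N)
  have hdiv : (t - 1) / optBins N = q := by
    rw [ht, Nat.add_sub_cancel, Nat.mul_add_div hM, Nat.div_eq_of_lt hp, add_zero]
  have hmod : (t - 1) % optBins N = p := by
    rw [ht, Nat.add_sub_cancel, Nat.mul_add_mod, Nat.mod_eq_of_lt hp]
  have hle : t ≤ zeroEnd N := by
    rw [ht, zeroEnd]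
    nlinarith
  rw [color, if_pos hle, hdiv, hmod]

theorem color_colorful {k p : ℕ} (hk : k ≤ N) (hp : p < optBins N) :
    color N (optBins N * (2 * k + 1) + p + 1) = if p < redCount N k then 1 else 2 := by
  rw [color_zero_part rfl (by omega) hp]
  simp [Nat.add_mod, show (2 * k + 1) / 2 = k by omega]

theorem color_white {k p : ℕ} (hk : k ≤ N + 1) (hp : p < optBins N) :
    color N (optBins N * (2 * k) + p + 1) = 0 := by
  rw [color_zero_part rfl (by omega) hp]
  simp

theorem color_le_two (ht : t ≤ zeroEnd N) : color N t ≤ 2 := by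
  unfold color; rw [if_pos ht]; split_ifs <;> omega

theorem three_le_color (ht : zeroEnd N < t) : 3 ≤ color N t := by
  unfold color; split_ifs <;> omega

theorem color_eq_zero_iff (ht : t ≤ zeroEnd N) :
    color N t = 0 ↔ (t - 1) / optBins N % 2 = 0 := by
  unfold color; rw [if_pos ht]; split_ifs <;> simp_all

theorem color_of_small_or_late (ht : zeroEnd N < t) (h : t ≤ smallEnd N ∨ blackEnd N < t) :
    color N t = t + 4 := by
  rw [color, if_neg (by omega), if_pos h]

theorem color_of_black (ht : smallEnd N < t) (ht' : t ≤ blackEnd N) : color N t = 3 := by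
  have : zeroEnd N ≤ smallEnd N := Nat.le_add_right _ _
  rw [color, if_neg (by omega), if_neg (by omega)]

theorem color_le_add_four : color N t ≤ t + 4 := by
  unfold color; split_ifs <;> omega

theorem color_ne_of_fresh {u v : ℕ} (hv : v ≤ u) (hu : zeroEnd N < u + 1)
    (hsmall : u + 1 ≤ smallEnd N ∨ blackEnd N < u + 1) : color N v ≠ color N (u + 1) := by
  rw [color_of_small_or_late hu hsmall]
  have := color_le_add_four (N := N) (t := v)
  omega

theorem color_optPacking_of_zeroEnd_lt (ht : zeroEnd N < t) :
    color N t = t + 4 ∧ optPacking N t = 1 ∨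
      color N t = 3 ∧ optPacking N t = t - smallEnd N + 1 ∧ smallEnd N < t := by
  have : zeroEnd N ≤ smallEnd N := zeroEnd_le_smallEnd
  unfold color optPacking; split_ifs <;> omega

variable {ε : ℝ}

theorem size_nonneg (hε : 0 ≤ ε) (hε₁ : ε ≤ 1) (t : ℕ) : 0 ≤ size N ε t := by
  unfold size; split_ifs <;> linarith

theorem size_le_one (hε : 0 ≤ ε) (hε₁ : 2 * ε ≤ 1) (t : ℕ) : size N ε t ≤ 1 := by
  unfold size; split_ifs <;> linarith

theorem size_of_color_eq_three (h : color N t = 3) : size N ε t = 1 - ε := by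
  unfold color at h; unfold size
  split_ifs at h ⊢ <;> first | rfl | omega

theorem size_of_four_le_color (h : 4 ≤ color N t) : size N ε t = 2 * ε := by
  unfold color at h; unfold size
  split_ifs at h ⊢ <;> first | rfl | omega

end

section

variable {N : ℕ} (R : BaPRun (numItems N) (color N))

theorem colorful_half {k e : ℕ} (hk : k ≤ N) (he : 4 * e ≤ optBins N)
    (hred : redCount N k = optBins N - 2 * e)
    (hnb : R.nbins (optBins N * (2 * k + 1)) = 2 * (optBins N - 2 * e))
    (hwhite : R.binsOfColor (optBins N * (2 * k + 1)) 0 = R.nbins (optBins N * (2 * k + 1))) :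
    R.nbins (optBins N * (2 * k + 1) + optBins N) = 2 * (optBins N - 2 * e) ∧
      R.binsOfColor (optBins N * (2 * k + 1) + optBins N) 0 = optBins N - 3 * e := by
  have hend : optBins N * (2 * k + 1) + optBins N ≤ numItems N :=
    le_trans (by unfold zeroEnd; nlinarith) zeroEnd_le_numItems
  have hcol : ∀ p < optBins N, color N (optBins N * (2 * k + 1) + p + 1) =
      if p < optBins N - 2 * e then 1 else 2 := fun p hp => hred ▸ color_colorful hk hp
  generalize optBins N = M at *
  generalize M * (2 * k + 1) = T at *
  have hzero : ∀ x, x ≠ 0 → R.binsOfColor T x = 0 := fun x hx =>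
    R.binsOfColor_eq_zero_of_eq_nbins hwhite hx.symm
  have hredc : ∀ j < M - 2 * e, color N (T + j + 1) = 1 := fun j hj => by
    rw [hcol j (by omega), if_pos hj]
  obtain ⟨hnb₁, hcnt₁⟩ := R.places_block (by omega) hredc (by rw [hzero 1 one_ne_zero]; omega)
  have hrest₁ : ∀ x, x ≠ 0 → x ≠ 1 → R.binsOfColor (T + (M - 2 * e)) x = 0 := fun x h₀ h₁ =>
    Nat.le_zero.1 <| (R.binsOfColor_le_of_forall_ne (by omega) fun j hj => by
      rw [hredc j hj]; exact h₁.symm).trans (hzero x h₀).le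
  have hpart := R.binsOfColor_add_binsOfColor_eq (T + (M - 2 * e)) zero_ne_one hrest₁
  have hbluec : ∀ j < 2 * e, color N (T + (M - 2 * e) + j + 1) = 2 := fun j hj => by
    rw [show T + (M - 2 * e) + j + 1 = T + (M - 2 * e + j) + 1 by omega, hcol _ (by omega),
      if_neg (by omega)]
  have hred₀ := hzero 1 one_ne_zero
  obtain ⟨hsum, hbal⟩ := R.balanced_block (by omega) hbluec zero_ne_one (by norm_num)
    (by norm_num) (fun x h₀ h₁ _ => hrest₁ x h₀ h₁) (by omega) (by omega)
  obtain ⟨hnb₂, -⟩ := R.places_block (by omega) hbluec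
    (by rw [hrest₁ 2 (by norm_num) (by norm_num)]; omega)
  rw [show T + (M - 2 * e) + 2 * e = T + M by omega] at hsum hbal hnb₂
  exact ⟨by omega, by omega⟩

theorem white_half {k e : ℕ} (hk : k ≤ N) (he : 4 * e ≤ optBins N)
    (hnb : R.nbins (optBins N * (2 * (k + 1))) = 2 * (optBins N - 2 * e))
    (hcnt : R.binsOfColor (optBins N * (2 * (k + 1))) 0 = optBins N - 3 * e) :
    R.nbins (optBins N * (2 * (k + 1)) + optBins N) = 2 * (optBins N - 2 * e) + e ∧
      R.binsOfColor (optBins N * (2 * (k + 1)) + optBins N) 0 =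
        R.nbins (optBins N * (2 * (k + 1)) + optBins N) := by
  have hend : optBins N * (2 * (k + 1)) + optBins N ≤ numItems N :=
    le_trans (by unfold zeroEnd; nlinarith) zeroEnd_le_numItems
  have hcol : ∀ p < optBins N, color N (optBins N * (2 * (k + 1)) + p + 1) = 0 :=
    fun p hp => color_white (by omega) hp
  generalize optBins N = M at *
  generalize M * (2 * (k + 1)) = W at *
  obtain ⟨hnb₁, hcnt₁⟩ := R.places_block (L := M - e) (by omega)
    (fun j hj => hcol j (by omega)) (by omega)
  obtain ⟨hnb₂, hwhite⟩ := R.opens_block (u := W + (M - e)) (L := e) (g := 0) (by omega)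
    (fun j hj => by
      rw [show W + (M - e) + j + 1 = W + (M - e + j) + 1 by omega]
      exact hcol _ (by omega))
    (by omega)
  rw [show W + (M - e) + e = W + M by omega] at hnb₂ hwhite
  exact ⟨by omega, hwhite⟩

theorem phase_succ {k : ℕ} (hk : k ≤ N)
    (hnb : R.nbins (optBins N * (2 * k + 1)) = binsAfterPhase N k)
    (hwhite : R.binsOfColor (optBins N * (2 * k + 1)) 0 = R.nbins (optBins N * (2 * k + 1))) :
    R.nbins (optBins N * (2 * (k + 1) + 1)) = binsAfterPhase N (k + 1) ∧
      R.binsOfColor (optBins N * (2 * (k + 1) + 1)) 0 =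
        R.nbins (optBins N * (2 * (k + 1) + 1)) := by
  set e := 3 ^ k * 4 ^ (N - k)
  have h4e : 3 ^ k * 4 ^ (N + 1 - k) = 4 * e := by
    rw [show N + 1 - k = N - k + 1 by omega, pow_succ]; ring
  have h3e : 3 ^ (k + 1) * 4 ^ (N + 1 - (k + 1)) = 3 * e := by
    rw [show N + 1 - (k + 1) = N - k by omega, pow_succ]; ring
  have he : 4 * e ≤ optBins N := by
    rw [← h4e, optBins]
    calc 3 ^ k * 4 ^ (N + 1 - k) ≤ 4 ^ k * 4 ^ (N + 1 - k) :=
          Nat.mul_le_mul_right _ (Nat.pow_le_pow_left (by norm_num) k)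
      _ = 4 ^ (N + 1) := by rw [← pow_add]; congr 1; omega
  rw [binsAfterPhase, h4e, show 2 * optBins N - 4 * e = 2 * (optBins N - 2 * e) by omega] at hnb
  obtain ⟨hnb₁, hcnt₁⟩ := colorful_half R hk he rfl hnb hwhite
  rw [show optBins N * (2 * k + 1) + optBins N = optBins N * (2 * (k + 1)) by ring] at hnb₁ hcnt₁
  obtain ⟨hnb₂, hwhite₂⟩ := white_half R hk he hnb₁ hcnt₁
  rw [show optBins N * (2 * (k + 1)) + optBins N = optBins N * (2 * (k + 1) + 1) by ring]
    at hnb₂ hwhite₂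
  refine ⟨?_, hwhite₂⟩
  rw [hnb₂, binsAfterPhase, h3e]
  omega

theorem white_after_phase : ∀ k ≤ N + 1,
    R.nbins (optBins N * (2 * k + 1)) = binsAfterPhase N k ∧
      R.binsOfColor (optBins N * (2 * k + 1)) 0 = R.nbins (optBins N * (2 * k + 1))
  | 0, _ => by
    have hend : optBins N ≤ numItems N :=
      le_trans (by unfold zeroEnd; nlinarith) zeroEnd_le_numItems
    obtain ⟨hnb, hwhite⟩ := R.opens_block (u := 0) (L := optBins N) (g := 0) (by omega)
      (fun j hj => by simpa using color_white (N := N) (k := 0) (by omega) hj)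
      (by simp [BaPRun.binsOfColor, R.nbins_zero])
    simp only [zero_add, R.nbins_zero] at hnb hwhite
    simp only [mul_zero, zero_add, mul_one, binsAfterPhase, pow_zero, one_mul, Nat.sub_zero]
    exact ⟨by rw [hnb, optBins]; omega, hwhite⟩
  | k + 1, hk => phase_succ R (by omega) (white_after_phase k (by omega)).1
      (white_after_phase k (by omega)).2

theorem white_at_zeroEnd :
    R.nbins (zeroEnd N) = finalBins N ∧ R.binsOfColor (zeroEnd N) 0 = finalBins N := by
  obtain ⟨hnb, hwhite⟩ := white_after_phase R (N + 1) le_rfl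
  rw [show optBins N * (2 * (N + 1) + 1) = zeroEnd N by rw [zeroEnd]; ring] at hnb hwhite
  rw [binsAfterPhase, Nat.sub_self, pow_zero, mul_one] at hnb
  exact ⟨hnb, hwhite.trans hnb⟩

theorem state_at_smallEnd :
    R.nbins (smallEnd N) = finalBins N ∧ R.binsOfColor (smallEnd N) 0 = 1 ∧
      (∀ h, h ≠ 0 → R.binsOfColor (smallEnd N) h ≤ 1) ∧
      ∀ x, x ≠ 0 → x ≤ 3 → R.binsOfColor (smallEnd N) x = 0 := by
  obtain ⟨hnb, hwhite⟩ := white_at_zeroEnd R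
  have hP : 1 ≤ finalBins N := optBins_pos.trans_le optBins_le_finalBins
  have hend : zeroEnd N + (finalBins N - 1) ≤ numItems N :=
    smallEnd_le_blackEnd.trans blackEnd_le_numItems
  have hcol : ∀ j < finalBins N - 1, color N (zeroEnd N + j + 1) = zeroEnd N + j + 1 + 4 :=
    fun j hj => color_of_small_or_late (by omega) (Or.inl (by unfold smallEnd; omega))
  have hzero : ∀ h, h ≠ 0 → R.binsOfColor (zeroEnd N) h = 0 :=
    fun h hh => R.binsOfColor_eq_zero_of_eq_nbins (hwhite.trans hnb.symm) hh.symm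
  obtain ⟨hnb', hcnt, hle⟩ := R.fresh_block hend
    (fun j hj v _ hv => color_ne_of_fresh hv (by omega) (Or.inl (by unfold smallEnd; omega)))
    (fun j hj => by rw [hcol j hj]; omega) (by omega) fun h hh => (hzero h hh).trans_le zero_le_one
  rw [show smallEnd N = zeroEnd N + (finalBins N - 1) from rfl]
  refine ⟨hnb'.trans hnb, by omega, hle, fun x hx hx3 => Nat.le_zero.1 <|
    (R.binsOfColor_le_of_forall_ne hend fun j hj => by rw [hcol j hj]; omega).trans
      (hzero x hx).le⟩

theorem black_block {j : ℕ} (hj : j ≤ optBins N - 1) :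
    R.nbins (smallEnd N + j) = finalBins N ∧ R.binsOfColor (smallEnd N + j) 3 = j := by
  obtain ⟨hnb, -, -, hzero⟩ := state_at_smallEnd R
  have hn : numItems N = smallEnd N + (optBins N - 1) + (optBins N - 2) := rfl
  have hP := optBins_le_finalBins (N := N)
  have := R.places_block (u := smallEnd N) (L := j) (g := 3) (by omega)
    (fun i hi => color_of_black (by omega) (by unfold blackEnd; omega))
    (by rw [hzero 3 (by norm_num) le_rfl]; omega)
  rwa [hnb, hzero 3 (by norm_num) le_rfl, zero_add] at this

theorem places_black {j : ℕ} (hj : j < optBins N - 1) : R.Places (smallEnd N + j) := by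
  obtain ⟨hnb, hcnt⟩ := black_block R hj.le
  have hn : numItems N = smallEnd N + (optBins N - 1) + (optBins N - 2) := rfl
  have hP := optBins_le_finalBins (N := N)
  refine R.places_of_binsOfColor_lt (by omega)
    (color_of_black (by omega) (by unfold blackEnd; omega)) ?_
  omega

theorem state_at_blackEnd :
    R.nbins (blackEnd N) = finalBins N ∧ R.binsOfColor (blackEnd N) 3 = optBins N - 1 ∧
      (∀ h, h ≠ 3 → R.binsOfColor (blackEnd N) h ≤ 1) ∧
      ((Finset.range (optBins N - 1)).filter
        fun j => R.hostColor (smallEnd N + j) = 0).card ≤ 1 := by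
  obtain ⟨-, hwhite, hle, -⟩ := state_at_smallEnd R
  obtain ⟨hnb, hcnt⟩ := black_block R le_rfl
  have hn : numItems N = smallEnd N + (optBins N - 1) + (optBins N - 2) := rfl
  have hcol : ∀ i < optBins N - 1, color N (smallEnd N + i + 1) = 3 := fun i hi =>
    color_of_black (by omega) (by unfold blackEnd; omega)
  have hdrain := R.binsOfColor_add_card_hostColor_eq (u := smallEnd N) (g := 0) (by omega)
    (fun i hi => by rw [hcol i hi]; norm_num) fun i hi => places_black R hi
  rw [show blackEnd N = smallEnd N + (optBins N - 1) from rfl]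
  refine ⟨hnb, hcnt, fun h hh => ?_, by omega⟩
  rcases eq_or_ne h 0 with rfl | h0
  · omega
  · exact (R.binsOfColor_le_of_forall_ne (by omega) fun i hi => by
      rw [hcol i hi]; exact hh.symm).trans (hle h h0)

theorem hot_black_mem_overflowItems {ε : ℝ} (hε : 0 < ε) {j : ℕ} (hj : j < optBins N - 1)
    (hhot : R.hostColor (smallEnd N + j) ≠ 0) :
    smallEnd N + j + 1 ∈ R.overflowItems (size N ε) := by
  obtain ⟨-, -, -, hzero⟩ := state_at_smallEnd R
  have hn : numItems N = smallEnd N + (optBins N - 1) + (optBins N - 2) := rfl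
  have hp := places_black R hj
  have hcol : ∀ i ≤ j, color N (smallEnd N + i + 1) = 3 := fun i hi =>
    color_of_black (by omega) (by unfold blackEnd; omega)
  have hfour : 4 ≤ R.hostColor (smallEnd N + j) := by
    have hne3 := hp.hostColor_ne
    rw [hcol j le_rfl] at hne3
    by_contra! hlt
    have hzero' := (R.binsOfColor_le_of_forall_ne (L := j) (by omega) fun i hi => by
      rw [hcol i hi.le]; omega).trans (hzero _ hhot (by omega)).le
    exact hp.binsOfColor_hostColor_pos.ne' (Nat.le_zero.1 hzero')
  refine R.succ_mem_overflowItems (by omega) hp fun u hu => ?_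
  rw [size_of_four_le_color (hu ▸ hfour), size_of_color_eq_three (hcol j le_rfl)]
  linarith

theorem late_mem_overflowItems {ε : ℝ} (hε : 0 < ε) {j : ℕ} (hj : j < optBins N - 2) :
    blackEnd N + j + 1 ∈ R.overflowItems (size N ε) := by
  obtain ⟨-, h3, hle, -⟩ := state_at_blackEnd R
  have hn : numItems N = blackEnd N + (optBins N - 2) := rfl
  have hlate : ∀ i, blackEnd N < blackEnd N + i + 1 := fun i => by omega
  have hz : zeroEnd N ≤ blackEnd N := zeroEnd_le_smallEnd.trans smallEnd_le_blackEnd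
  obtain ⟨-, hcnt, hle'⟩ := R.fresh_block (L := j) (g := 3) (by omega)
    (fun i _ v _ hv => color_ne_of_fresh hv (by omega) (Or.inr (hlate i)))
    (fun i _ => by rw [color_of_small_or_late (by omega) (Or.inr (hlate i))]; omega)
    (by omega) hle
  obtain ⟨hp, hhost⟩ := R.places_and_hostColor_eq_of_dominant (by omega)
    (by rw [color_of_small_or_late (by omega) (Or.inr (hlate j))]; omega) (by omega) hle'
  refine R.succ_mem_overflowItems (by omega) hp fun u hu => ?_
  rw [size_of_color_eq_three (hu.trans hhost),
    size_of_four_le_color (by rw [color_of_small_or_late (by omega) (Or.inr (hlate j))]; omega)]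
  linarith

theorem nbins_numItems : R.nbins (numItems N) = finalBins N := by
  obtain ⟨hnb, h3, hle, -⟩ := state_at_blackEnd R
  have hz : zeroEnd N ≤ blackEnd N := zeroEnd_le_smallEnd.trans smallEnd_le_blackEnd
  have hlate : ∀ i, blackEnd N < blackEnd N + i + 1 := fun i => by omega
  have hM := four_le_optBins (N := N)
  obtain ⟨hnb', -, -⟩ := R.fresh_block (u := blackEnd N) (L := optBins N - 2) (g := 3) le_rfl
    (fun i _ v _ hv => color_ne_of_fresh hv (by omega) (Or.inr (hlate i)))
    (fun i _ => by rw [color_of_small_or_late (by omega) (Or.inr (hlate i))]; omega)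
    (by omega) hle
  exact hnb'.trans hnb

theorem two_mul_le_card_overflowItems {ε : ℝ} (hε : 0 < ε) :
    2 * (optBins N - 2) ≤ (R.overflowItems (size N ε)).card := by
  obtain ⟨-, -, -, hcold⟩ := state_at_blackEnd R
  have hM := four_le_optBins (N := N)
  set cold := (Finset.range (optBins N - 1)).filter fun j => R.hostColor (smallEnd N + j) = 0
  have hhot := Finset.le_card_sdiff cold (Finset.range (optBins N - 1))
  rw [Finset.card_range] at hhot
  have hsub : (Finset.range (optBins N - 1) \ cold).image (fun j => smallEnd N + j + 1) ∪
      (Finset.range (optBins N - 2)).image (fun j => blackEnd N + j + 1) ⊆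
        R.overflowItems (size N ε) := by
    refine Finset.union_subset (fun t ht => ?_) fun t ht => ?_
    · obtain ⟨j, hj, rfl⟩ := Finset.mem_image.1 ht
      rw [Finset.mem_sdiff] at hj
      exact hot_black_mem_overflowItems R hε (Finset.mem_range.1 hj.1)
        fun h => hj.2 (Finset.mem_filter.2 ⟨hj.1, h⟩)
    · obtain ⟨j, hj, rfl⟩ := Finset.mem_image.1 ht
      exact late_mem_overflowItems R hε (Finset.mem_range.1 hj)
  have hdisj : Disjoint ((Finset.range (optBins N - 1) \ cold).image fun j => smallEnd N + j + 1)
      ((Finset.range (optBins N - 2)).image fun j => blackEnd N + j + 1) := by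
    rw [Finset.disjoint_left]
    rintro _ h₁ h₂
    obtain ⟨i, hi, rfl⟩ := Finset.mem_image.1 h₁
    obtain ⟨j, -, hij⟩ := Finset.mem_image.1 h₂
    rw [Finset.mem_sdiff, Finset.mem_range] at hi
    have : blackEnd N = smallEnd N + (optBins N - 1) := rfl
    omega
  have := Finset.card_le_card hsub
  rw [Finset.card_union_of_disjoint hdisj,
    Finset.card_image_of_injective _ fun a b h => by simpa using h,
    Finset.card_image_of_injective _ fun a b h => by simpa using h, Finset.card_range] at this
  omega

theorem finalBins_add_le_bapCost {ε : ℝ} (hε : 0 < ε) (hε₁ : ε ≤ 1) :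
    finalBins N + 2 * (optBins N - 2) ≤ bapCost (size N ε) R := by
  have := R.nbins_add_card_overflowItems_le_bapCost fun t _ => size_nonneg (N := N) hε.le hε₁ t
  rw [nbins_numItems] at this
  have := two_mul_le_card_overflowItems R hε
  omega

end

section

variable {N : ℕ} {ε : ℝ}

theorem optPacking_mem_Icc (t : ℕ) :
    1 ≤ optPacking N t ∧ optPacking N t ≤ optBins N := by
  have hM := optBins_pos (N := N)
  have := Nat.mod_lt (t - 1) hM
  have hB : blackEnd N = smallEnd N + (optBins N - 1) := rfl
  unfold optPacking; split_ifs <;> omega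

theorem optPacking_colors {i j : ℕ} (hi : 1 ≤ i) (hij : i < j)
    (hf : optPacking N i = optPacking N j)
    (hbetween : ∀ l, i < l → l < j → optPacking N l ≠ optPacking N i) : color N i ≠ color N j := by
  have hM := optBins_pos (N := N)
  rcases le_or_gt j (zeroEnd N) with hj | hj
  · have hfi : optPacking N i = (i - 1) % optBins N + 1 := if_pos (by omega)
    have hfj : optPacking N j = (j - 1) % optBins N + 1 := if_pos hj
    have hnext : j = i + optBins N := by
      obtain ⟨q, hq⟩ : optBins N ∣ (j - 1) - (i - 1) :=
        (Nat.modEq_iff_dvd' (by omega)).1 (by unfold Nat.ModEq; omega)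
      rcases Nat.lt_trichotomy q 1 with hq1 | rfl | hq1
      · interval_cases q; omega
      · omega
      · have : optBins N * 2 ≤ optBins N * q := Nat.mul_le_mul_left _ hq1
        refine absurd ?_ (hbetween (i + optBins N) (by omega) (by omega))
        rw [hfi]
        simp only [optPacking, if_pos (show i + optBins N ≤ zeroEnd N by omega),
          show i + optBins N - 1 = i - 1 + optBins N by omega, Nat.add_mod_right]
    have hdiv : (j - 1) / optBins N = (i - 1) / optBins N + 1 := by
      rw [hnext, show i + optBins N - 1 = i - 1 + optBins N * 1 by omega,
        Nat.add_mul_div_left _ _ hM]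
    intro h
    have hi0 := color_eq_zero_iff (N := N) (t := i) (by omega)
    have hj0 := color_eq_zero_iff (N := N) hj
    omega
  rcases le_or_gt i (zeroEnd N) with hi' | hi'
  · have := color_le_two hi'
    have := three_le_color hj
    omega
  rcases color_optPacking_of_zeroEnd_lt hi' with hci | hci <;>
    rcases color_optPacking_of_zeroEnd_lt hj with hcj | hcj <;> omega

theorem optPacking_load_le_one (hε : 0 < ε) (hεM : ε < 1 / (8 * optBins N)) (b : ℕ) :
    ∑ t ∈ (Finset.Icc 1 (numItems N)).filter (fun t => optPacking N t = b), size N ε t ≤ 1 := by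
  have hM : (4 : ℝ) ≤ optBins N := by exact_mod_cast four_le_optBins
  have hε₁ : 8 * optBins N * ε < 1 := by rwa [lt_div_iff₀ (by positivity), mul_comm] at hεM
  set F := (Finset.Icc 1 (numItems N)).filter fun t => optPacking N t = b
  rw [← Finset.sum_filter_of_ne (p := fun t => zeroEnd N < t) fun t _ h => by
    by_contra! ht; exact h (if_pos ht)]
  rcases eq_or_ne b 1 with rfl | hb
  · have hcard : ((F.filter fun t => zeroEnd N < t).card : ℝ) ≤ 4 * optBins N := by
      have hsub : F.filter (fun t => zeroEnd N < t) ⊆ Finset.Ioc (zeroEnd N) (numItems N) :=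
        fun t ht => by simp_all [F]
      have hP : finalBins N ≤ 2 * optBins N := Nat.sub_le _ _
      have : numItems N - zeroEnd N ≤ 4 * optBins N := by
        unfold numItems blackEnd smallEnd; omega
      exact_mod_cast (Finset.card_le_card hsub).trans (by simpa using this)
    calc ∑ t ∈ F.filter (fun t => zeroEnd N < t), size N ε t
        ≤ (F.filter fun t => zeroEnd N < t).card • (2 * ε) :=
          Finset.sum_le_card_nsmul _ _ _ fun t ht => by
            simp only [F, Finset.mem_filter] at ht
            rcases color_optPacking_of_zeroEnd_lt ht.2 with h | h
            · exact (size_of_four_le_color (by omega)).le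
            · omega
      _ ≤ 1 := by rw [nsmul_eq_mul]; nlinarith
  · have hsub : F.filter (fun t => zeroEnd N < t) ⊆ {smallEnd N + b - 1} := fun t ht => by
      simp only [F, Finset.mem_filter] at ht
      rw [Finset.mem_singleton]
      rcases color_optPacking_of_zeroEnd_lt ht.2 with h | h <;> omega
    refine (Finset.sum_le_sum_of_subset_of_nonneg hsub fun t _ _ =>
      size_nonneg hε.le (by nlinarith) t).trans ?_
    rw [Finset.sum_singleton]
    exact size_le_one hε.le (by nlinarith) _

theorem sub_one_lt_sum_size (hε : 0 < ε) (hε₁ : ε ≤ 1) :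
    (optBins N : ℝ) - 1 < ∑ t ∈ Finset.Icc 1 (numItems N), size N ε t := by
  have hM := four_le_optBins (N := N)
  have hzs := zeroEnd_le_smallEnd (N := N)
  have hn : numItems N = blackEnd N + (optBins N - 2) := rfl
  have hB : blackEnd N = smallEnd N + (optBins N - 1) := rfl
  have hblack : ∑ t ∈ Finset.Ioc (smallEnd N) (blackEnd N), size N ε t =
      ((optBins N - 1 : ℕ) : ℝ) * (1 - ε) := by
    rw [Finset.sum_congr rfl fun t ht => size_of_color_eq_three (color_of_black
      (Finset.mem_Ioc.1 ht).1 (Finset.mem_Ioc.1 ht).2), Finset.sum_const, Nat.card_Ioc,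
      nsmul_eq_mul, show blackEnd N - smallEnd N = optBins N - 1 by omega]
  have hlate : ∑ t ∈ Finset.Ioc (blackEnd N) (numItems N), size N ε t =
      ((optBins N - 2 : ℕ) : ℝ) * (2 * ε) := by
    have hsize : ∀ t ∈ Finset.Ioc (blackEnd N) (numItems N), size N ε t = 2 * ε := fun t ht => by
      have := (Finset.mem_Ioc.1 ht).1
      exact size_of_four_le_color (by rw [color_of_small_or_late (by omega) (Or.inr this)]; omega)
    rw [Finset.sum_congr rfl hsize, Finset.sum_const, Nat.card_Ioc, nsmul_eq_mul,
      show numItems N - blackEnd N = optBins N - 2 by omega]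
  have hsub : Finset.Ioc (smallEnd N) (numItems N) ⊆ Finset.Icc 1 (numItems N) := fun t ht => by
    simp only [Finset.mem_Ioc, Finset.mem_Icc] at ht ⊢; omega
  calc (optBins N : ℝ) - 1
      < ((optBins N - 1 : ℕ) : ℝ) * (1 - ε) + ((optBins N - 2 : ℕ) : ℝ) * (2 * ε) := by
        push_cast [show 1 ≤ optBins N by omega, show 2 ≤ optBins N by omega]
        have : (4 : ℝ) ≤ optBins N := by exact_mod_cast hM
        nlinarith
    _ = ∑ t ∈ Finset.Ioc (smallEnd N) (numItems N), size N ε t := by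
        rw [← Finset.sum_Ioc_consecutive _ (show smallEnd N ≤ blackEnd N by omega)
          (show blackEnd N ≤ numItems N by omega), hblack, hlate]
    _ ≤ _ := Finset.sum_le_sum_of_subset_of_nonneg hsub fun t _ _ => size_nonneg hε.le hε₁ t

theorem OPTcost_eq_optBins (hε : 0 < ε) (hεM : ε < 1 / (8 * optBins N)) :
    OPTcost (numItems N) (size N ε) (color N) = optBins N := by
  have hM : (4 : ℝ) ≤ optBins N := by exact_mod_cast four_le_optBins
  have hε₁ : 8 * optBins N * ε < 1 := by rwa [lt_div_iff₀ (by positivity), mul_comm] at hεM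
  exact OPTcost_eq_of_sub_one_lt_sum
    ⟨fun t _ _ => optPacking_mem_Icc t, optPacking_load_le_one hε hεM,
      fun i j hi hij _ hf hb => optPacking_colors hi hij hf hb⟩
    (sub_one_lt_sum_size hε (by nlinarith))

theorem instance_spec (hN : 2 ≤ N) (hε : 0 < ε) (hεM : ε < 1 / (8 * (4 : ℝ) ^ (N + 1))) :
    (∀ t, 1 ≤ t → t ≤ numItems N → size N ε t ∈ Set.Icc (0 : ℝ) 1) ∧
      OPTcost (numItems N) (size N ε) (color N) = 4 ^ (N + 1) ∧
      ∀ R : BaPRun (numItems N) (color N), 4 * 4 ^ (N + 1) - 4 * 3 ^ N ≤ bapCost (size N ε) R := by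
  have hεM' : ε < 1 / (8 * optBins N) := by simpa [optBins] using hεM
  have hε₁ : 2 * ε ≤ 1 := by
    have : (1 : ℝ) / (8 * (4 : ℝ) ^ (N + 1)) ≤ 1 / 2 := by
      gcongr; nlinarith [one_le_pow₀ (show (1 : ℝ) ≤ 4 by norm_num) (n := N + 1)]
    linarith
  refine ⟨fun t _ _ => ⟨size_nonneg hε.le (by linarith) t, size_le_one hε.le hε₁ t⟩,
    OPTcost_eq_optBins hε hεM', fun R => ?_⟩
  exact (four_mul_pow_sub_le hN).trans (finalBins_add_le_bapCost R hε (by linarith))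

end

end BaPLowerBound

theorem mul_pow_le_four_mul_pow_sub {ρ : ℝ} {N : ℕ} (h : (3 / 4 : ℝ) ^ N < 4 - ρ) :
    ρ * 4 ^ (N + 1) ≤ 4 * 4 ^ (N + 1) - 4 * 3 ^ N := by
  have h4 : (0 : ℝ) < 4 ^ (N + 1) := by positivity
  have : (4 : ℝ) * 3 ^ N = (3 / 4) ^ N * 4 ^ (N + 1) := by
    rw [div_pow, pow_succ]; field_simp
  nlinarith

/-- for every `N ≥ 2`, with `M = 4^(N+1)` and `m = (3/4)^N·M = 4·3^N`, and every
`0 < ε < 1/(8M)`, there is a colorful bin packing instance (with colors from ℕ) with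
`OPT = M` on which every run of BaP uses at least `4M − m` bins.  Consequently, the asymptotic
competitive ratio of BaP is at least `4`: for every `ρ < 4` and every `K` there is an instance
with `OPT ≥ K` on which every run of BaP uses at least `ρ·OPT` bins. -/
theorem bap_lower_bound_four :
    (∀ N : ℕ, 2 ≤ N → ∀ ε : ℝ, 0 < ε → ε < 1 / (8 * (4 : ℝ) ^ (N + 1)) →
      ∃ (n : ℕ) (s : ℕ → ℝ) (c : ℕ → ℕ),
        (∀ t, 1 ≤ t → t ≤ n → s t ∈ Set.Icc (0 : ℝ) 1) ∧
        OPTcost n s c = 4 ^ (N + 1) ∧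
        ∀ R : BaPRun n c, 4 * 4 ^ (N + 1) - 4 * 3 ^ N ≤ bapCost s R) ∧
    (∀ ρ : ℝ, ρ < 4 → ∀ K : ℕ,
      ∃ (n : ℕ) (s : ℕ → ℝ) (c : ℕ → ℕ),
        (∀ t, 1 ≤ t → t ≤ n → s t ∈ Set.Icc (0 : ℝ) 1) ∧
        K ≤ OPTcost n s c ∧
        ∀ R : BaPRun n c, ρ * (OPTcost n s c : ℝ) ≤ (bapCost s R : ℝ)) := by
  refine ⟨fun N hN ε hε hεM => ⟨_, _, _, BaPLowerBound.instance_spec hN hε hεM⟩, fun ρ hρ K => ?_⟩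
  obtain ⟨N₀, hN₀⟩ := exists_pow_lt_of_lt_one (sub_pos.2 hρ) (by norm_num : (3 / 4 : ℝ) < 1)
  set N := max (max 2 N₀) K
  have hpow : (3 / 4 : ℝ) ^ N < 4 - ρ :=
    (pow_le_pow_of_le_one (by norm_num) (by norm_num) (by omega)).trans_lt hN₀
  have hε : (0 : ℝ) < 1 / (16 * 4 ^ (N + 1)) := by positivity
  obtain ⟨hsize, hopt, hcost⟩ := BaPLowerBound.instance_spec (N := N) (by omega) hε
    (by gcongr; norm_num)
  refine ⟨_, _, BaPLowerBound.color N, hsize, ?_, fun R => ?_⟩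
  · rw [hopt]
    exact (Nat.lt_pow_self (by norm_num : 1 < 4)).le.trans'
      (by omega) |>.trans (Nat.pow_le_pow_right (by norm_num) (Nat.le_succ N))
  · have h34 : 4 * 3 ^ N ≤ 4 * 4 ^ (N + 1) :=
      Nat.mul_le_mul_left _ ((Nat.pow_le_pow_left (by norm_num) N).trans
        (Nat.pow_le_pow_right (by norm_num) (Nat.le_succ N)))
    have := (Nat.cast_le (α := ℝ)).2 (hcost R)
    rw [Nat.cast_sub h34] at this
    rw [hopt]
    push_cast at this ⊢
    linarith [mul_pow_le_four_mul_pow_sub hpow]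
end
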